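/- arXiv:2506.13365 — 5 statements merged into one kernel-verified Lean document; each statement's English description precedes it below -/
import Mathlib

section
/- Let m ≥ 1, β > 0, s > 0, σ > 0 with σ ≤ s^β, and c > 0. Then ∫_0^∞ exp(-c r² s⁻¹ / (σ + r^{2β/(β+1)})) r^{m-1} dr ≤ C(m, β, c) · s^{m(β+1)/2}. -/
open MeasureTheory Real Set

lemma aux_integrableOn_rpow_mul_exp {p q b : ℝ} (hp : 0 < p) (hq : -1 < q) (hb : 0 < b) :
    IntegrableOn (fun x : ℝ => x ^ q * Real.exp (-(b * x ^ p))) (Set.Ioi 0) := by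
  set a : ℝ := (q + 1) / p with ha_def
  have ha : 0 < a := div_pos (by linarith) hp
  have h0 : IntegrableOn (fun y : ℝ => Real.exp (-y) * y ^ (a - 1)) (Set.Ioi 0) :=
    Real.GammaIntegral_convergent ha
  have h1 : IntegrableOn (fun y : ℝ => Real.exp (-(b * y)) * (b * y) ^ (a - 1))
      (Set.Ioi 0) := by
    have := (integrableOn_Ioi_comp_mul_left_iff
      (fun y : ℝ => Real.exp (-y) * y ^ (a - 1)) 0 hb).mpr (by rwa [mul_zero])
    exact this
  have h2' : IntegrableOn (fun y : ℝ => b ^ (a - 1) * (y ^ (a - 1) * Real.exp (-(b * y))))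
      (Set.Ioi 0) := by
    refine h1.congr_fun (fun y hy => ?_) measurableSet_Ioi
    dsimp only
    rw [Real.mul_rpow hb.le (le_of_lt hy)]
    ring
  have hbne : b ^ (a - 1) ≠ 0 := (Real.rpow_pos_of_pos hb _).ne'
  have h3 : IntegrableOn
      (fun y : ℝ => (b ^ (a - 1))⁻¹ * (b ^ (a - 1) * (y ^ (a - 1) * Real.exp (-(b * y)))))
      (Set.Ioi 0) := h2'.const_mul _
  have h2 : IntegrableOn (fun y : ℝ => y ^ (a - 1) * Real.exp (-(b * y))) (Set.Ioi 0) := by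
    refine h3.congr_fun (fun y _ => ?_) measurableSet_Ioi
    dsimp only
    rw [← mul_assoc, inv_mul_cancel₀ hbne, one_mul]
  have h4 := (integrableOn_Ioi_comp_rpow_iff'
    (fun y : ℝ => y ^ (a - 1) * Real.exp (-(b * y))) hp.ne').mpr h2
  refine h4.congr_fun (fun x hx => ?_) measurableSet_Ioi
  have hx0 : (0 : ℝ) < x := hx
  have hexp : p - 1 + p * (a - 1) = q := by
    rw [ha_def]; field_simp; ring
  dsimp only
  rw [smul_eq_mul, ← Real.rpow_mul hx0.le, ← mul_assoc, ← Real.rpow_add hx0, hexp]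

/-- Gaussian-type integral estimate: for `m ≥ 1`, `β > 0`, `c > 0`, there is
`C = C(m,β,c)` such that for all `s > 0` and `0 < σ ≤ s^β`,
`∫_0^∞ exp(-c r²/s / (σ + r^{2β/(β+1)})) r^{m-1} dr ≤ C s^{m(β+1)/2}`. -/
theorem stmt_5 (m : ℕ) (hm : 1 ≤ m) (β c : ℝ) (hβ : 0 < β) (hc : 0 < c) :
    ∃ C : ℝ, 0 < C ∧ ∀ s σ : ℝ, 0 < s → 0 < σ → σ ≤ s ^ β →
      ∫ r in Set.Ioi (0 : ℝ),
          Real.exp (-(c * r ^ 2 / s) / (σ + r ^ (2 * β / (β + 1)))) * r ^ ((m : ℝ) - 1)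
        ≤ C * s ^ ((m : ℝ) * (β + 1) / 2) := by
  have hβ1 : (0 : ℝ) < β + 1 := by linarith
  set γ : ℝ := 2 / (β + 1) with hγdef
  have hγ : 0 < γ := by positivity
  have hm1 : (1 : ℝ) ≤ (m : ℝ) := by exact_mod_cast hm
  set q : ℝ := (m : ℝ) - 1 with hqdef
  have hq : (-1 : ℝ) < q := by rw [hqdef]; linarith
  have hq1 : q + 1 = (m : ℝ) := by rw [hqdef]; ring
  set T : ℝ := (m : ℝ) * (β + 1) / 2 with hTdef
  have hTγ : (q + 1) / γ = T := by
    rw [hq1, hγdef, hTdef, div_div_eq_mul_div]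
  have hq1pos : (0 : ℝ) < q + 1 := by rw [hq1]; linarith
  refine ⟨(c / 2) ^ (-(q + 1) / 2) * (1 / 2) * Real.Gamma ((q + 1) / 2)
      + (c / 2) ^ (-(q + 1) / γ) * (1 / γ) * Real.Gamma ((q + 1) / γ), ?_, ?_⟩
  · have h1 : 0 < Real.Gamma ((q + 1) / 2) :=
      Real.Gamma_pos_of_pos (div_pos hq1pos two_pos)
    have h2 : 0 < Real.Gamma ((q + 1) / γ) :=
      Real.Gamma_pos_of_pos (div_pos hq1pos hγ)
    positivity
  intro s σ hs hσ hσs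
  set α : ℝ := 2 * β / (β + 1) with hαdef
  have hα : 0 < α := by positivity
  have hαγ : 2 - α = γ := by rw [hαdef, hγdef]; field_simp; ring
  set b₁ : ℝ := c / (2 * s ^ (β + 1)) with hb₁def
  set b₂ : ℝ := c / (2 * s) with hb₂def
  have hsp : (0 : ℝ) < s ^ (β + 1) := Real.rpow_pos_of_pos hs _
  have hb₁ : 0 < b₁ := by rw [hb₁def]; positivity
  have hb₂ : 0 < b₂ := by rw [hb₂def]; positivity
  -- pointwise bound
  have key : ∀ r ∈ Set.Ioi (0 : ℝ),
      Real.exp (-(c * r ^ 2 / s) / (σ + r ^ α)) * r ^ q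
        ≤ r ^ q * Real.exp (-(b₁ * r ^ (2 : ℝ))) + r ^ q * Real.exp (-(b₂ * r ^ γ)) := by
    intro r hr
    have hr0 : (0 : ℝ) < r := hr
    have hrα : 0 < r ^ α := Real.rpow_pos_of_pos hr0 _
    have hD : 0 < σ + r ^ α := by positivity
    have hr2 : (r : ℝ) ^ (2 : ℕ) = r ^ (2 : ℝ) := by
      rw [← Real.rpow_natCast r 2]; norm_num
    have hnum : (0 : ℝ) ≤ c * r ^ 2 := by positivity
    have hmain : b₁ * r ^ (2 : ℝ) ≤ (c * r ^ 2 / s) / (σ + r ^ α)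
        ∨ b₂ * r ^ γ ≤ (c * r ^ 2 / s) / (σ + r ^ α) := by
      have hEeq : (c * r ^ 2 / s) / (σ + r ^ α) = (c * r ^ 2) / (s * (σ + r ^ α)) := by
        rw [div_div]
      rcases le_total (r ^ α) (s ^ β) with hcase | hcase
      · left
        rw [hEeq]
        have h3 : s * s ^ β = s ^ (β + 1) := by
          rw [Real.rpow_add hs, Real.rpow_one]; ring
        have hden : s * (σ + r ^ α) ≤ 2 * s ^ (β + 1) := by nlinarith
        calc b₁ * r ^ (2 : ℝ) = (c * r ^ 2) / (2 * s ^ (β + 1)) := by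
              rw [hb₁def, ← hr2]; ring
          _ ≤ (c * r ^ 2) / (s * (σ + r ^ α)) :=
              div_le_div_of_nonneg_left hnum (by positivity) hden
      · right
        rw [hEeq]
        have hden : s * (σ + r ^ α) ≤ 2 * s * r ^ α := by nlinarith
        have hval : b₂ * r ^ γ = (c * r ^ 2) / (2 * s * r ^ α) := by
          rw [← hαγ, Real.rpow_sub hr0, ← hr2, hb₂def]
          field_simp
        rw [hval]
        exact div_le_div_of_nonneg_left hnum (by positivity) hden
    have hexp_nonneg₁ : (0:ℝ) ≤ r ^ q * Real.exp (-(b₁ * r ^ (2:ℝ))) := by positivity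
    have hexp_nonneg₂ : (0:ℝ) ≤ r ^ q * Real.exp (-(b₂ * r ^ γ)) := by positivity
    have hrq : (0:ℝ) ≤ r ^ q := by positivity
    rcases hmain with h | h
    · have hle : Real.exp (-(c * r ^ 2 / s) / (σ + r ^ α)) ≤ Real.exp (-(b₁ * r ^ (2:ℝ))) := by
        apply Real.exp_le_exp.mpr
        rw [neg_div]
        linarith
      calc Real.exp (-(c * r ^ 2 / s) / (σ + r ^ α)) * r ^ q
          ≤ Real.exp (-(b₁ * r ^ (2:ℝ))) * r ^ q := mul_le_mul_of_nonneg_right hle hrq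
        _ = r ^ q * Real.exp (-(b₁ * r ^ (2:ℝ))) := by ring
        _ ≤ _ := le_add_of_nonneg_right hexp_nonneg₂
    · have hle : Real.exp (-(c * r ^ 2 / s) / (σ + r ^ α)) ≤ Real.exp (-(b₂ * r ^ γ)) := by
        apply Real.exp_le_exp.mpr
        rw [neg_div]
        linarith
      calc Real.exp (-(c * r ^ 2 / s) / (σ + r ^ α)) * r ^ q
          ≤ Real.exp (-(b₂ * r ^ γ)) * r ^ q := mul_le_mul_of_nonneg_right hle hrq
        _ = r ^ q * Real.exp (-(b₂ * r ^ γ)) := by ring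
        _ ≤ _ := le_add_of_nonneg_left hexp_nonneg₁
  -- integrability
  have hint₁ : IntegrableOn (fun r : ℝ => r ^ q * Real.exp (-(b₁ * r ^ (2:ℝ)))) (Set.Ioi 0) :=
    aux_integrableOn_rpow_mul_exp (by norm_num) hq hb₁
  have hint₂ : IntegrableOn (fun r : ℝ => r ^ q * Real.exp (-(b₂ * r ^ γ))) (Set.Ioi 0) :=
    aux_integrableOn_rpow_mul_exp hγ hq hb₂
  have step1 : ∫ r in Set.Ioi (0 : ℝ),
      Real.exp (-(c * r ^ 2 / s) / (σ + r ^ α)) * r ^ q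
        ≤ ∫ r in Set.Ioi (0 : ℝ),
          (r ^ q * Real.exp (-(b₁ * r ^ (2:ℝ))) + r ^ q * Real.exp (-(b₂ * r ^ γ))) := by
    apply integral_mono_of_nonneg
    · filter_upwards [self_mem_ae_restrict (measurableSet_Ioi : MeasurableSet (Set.Ioi (0:ℝ)))]
        with r hr
      have hr0 : (0 : ℝ) < r := hr
      positivity
    · exact hint₁.add hint₂
    · filter_upwards [self_mem_ae_restrict (measurableSet_Ioi : MeasurableSet (Set.Ioi (0:ℝ)))]
        with r hr
      exact key r hr
  have step2 : ∫ r in Set.Ioi (0 : ℝ),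
      (r ^ q * Real.exp (-(b₁ * r ^ (2:ℝ))) + r ^ q * Real.exp (-(b₂ * r ^ γ)))
      = b₁ ^ (-(q + 1) / 2) * (1 / 2) * Real.Gamma ((q + 1) / 2)
        + b₂ ^ (-(q + 1) / γ) * (1 / γ) * Real.Gamma ((q + 1) / γ) := by
    rw [integral_add hint₁ hint₂]
    rw [show (fun r : ℝ => r ^ q * Real.exp (-(b₁ * r ^ (2:ℝ)))) =
      (fun r : ℝ => r ^ q * Real.exp (-b₁ * r ^ (2:ℝ))) from by funext r; rw [neg_mul]]
    rw [show (fun r : ℝ => r ^ q * Real.exp (-(b₂ * r ^ γ))) =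
      (fun r : ℝ => r ^ q * Real.exp (-b₂ * r ^ γ)) from by funext r; rw [neg_mul]]
    rw [integral_rpow_mul_exp_neg_mul_rpow (by norm_num : (0:ℝ) < 2) hq hb₁,
      integral_rpow_mul_exp_neg_mul_rpow hγ hq hb₂]
  -- values
  have hval₁ : b₁ ^ (-(q + 1) / 2) = (c / 2) ^ (-(q + 1) / 2) * s ^ T := by
    have hb₁' : b₁ = (c / 2) * s ^ (-(β + 1)) := by
      rw [hb₁def, Real.rpow_neg hs.le]; field_simp
    rw [hb₁', Real.mul_rpow (by positivity) (by positivity), ← Real.rpow_mul hs.le]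
    congr 1
    rw [hTdef, ← hq1]
    ring
  have hval₂ : b₂ ^ (-(q + 1) / γ) = (c / 2) ^ (-(q + 1) / γ) * s ^ T := by
    have hb₂' : b₂ = (c / 2) * s ^ (-1 : ℝ) := by
      rw [hb₂def, Real.rpow_neg_one]; field_simp
    rw [hb₂', Real.mul_rpow (by positivity) (by positivity), ← Real.rpow_mul hs.le]
    congr 1
    rw [← hTγ]
    ring
  calc ∫ r in Set.Ioi (0 : ℝ),
      Real.exp (-(c * r ^ 2 / s) / (σ + r ^ α)) * r ^ q
      ≤ _ := step1
    _ = _ := step2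
    _ = ((c / 2) ^ (-(q + 1) / 2) * (1 / 2) * Real.Gamma ((q + 1) / 2)
        + (c / 2) ^ (-(q + 1) / γ) * (1 / γ) * Real.Gamma ((q + 1) / γ)) * s ^ T := by
      rw [hval₁, hval₂]; ring
end

section
/- Let (M, d, μ) be a metric measure space satisfying the volume doubling condition V(x, R)/V(x, r) ≤ C (R/r)^μ for all x and R ≥ r > 0. If additionally the reverse doubling (R/r)^ν ≤ C' V(x,R)/V(x,r) holds for some ν > p, then for every t > 0, ∫_{B(o,√t)} r(x)^{-p} dμ(x) ≤ C'' t^{-p/2} V(o, √t), where r(x) = d(x, o). -/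
open MeasureTheory Metric

/-- In a doubling metric measure space which also satisfies reverse doubling with
exponent `ν > p`, one has `∫_{B(o,√t)} d(x,o)^{-p} dμ ≤ C'' t^{-p/2} V(o,√t)`. -/
theorem stmt_6 (M : Type) [MetricSpace M] [MeasureSpace M]
    (o : M) (C C' μ₀ ν p : ℝ)
    (hC : 0 < C) (hC' : 0 < C') (hμ₀ : 0 < μ₀) (hp : 0 < p) (hν : p < ν)
    (hVpos : ∀ (x : M), ∀ r > (0:ℝ), 0 < volume (ball x r))
    (hVfin : ∀ (x : M) (r : ℝ), volume (ball x r) < ⊤)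
    (hD : ∀ (x : M) (R r : ℝ), 0 < r → r ≤ R →
      volume (ball x R) ≤ ENNReal.ofReal (C * (R / r) ^ μ₀) * volume (ball x r))
    (hRD : ∀ (x : M) (R r : ℝ), 0 < r → r ≤ R →
      ENNReal.ofReal ((R / r) ^ ν) * volume (ball x r) ≤
        ENNReal.ofReal C' * volume (ball x R)) :
    ∃ C'' : ℝ, 0 < C'' ∧ ∀ t > (0:ℝ),
      ∫ x in ball o (Real.sqrt t), (dist x o) ^ (-p) ∂volume ≤
        C'' * t ^ (-p / 2) * (volume (ball o (Real.sqrt t))).toReal := by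
  have hp' : -p ≠ 0 := by
    simp only [ne_eq, neg_eq_zero]; exact hp.ne'
  have hr0 : (0:ℝ) < 2 ^ (p - ν) := Real.rpow_pos_of_pos two_pos _
  have hr1 : (2:ℝ) ^ (p - ν) < 1 :=
    Real.rpow_lt_one_of_one_lt_of_neg one_lt_two (by linarith)
  have h2p : (0:ℝ) < 2 ^ p := Real.rpow_pos_of_pos two_pos _
  have hKpos : 0 < C' * 2 ^ p * (1 - 2 ^ (p - ν))⁻¹ :=
    mul_pos (mul_pos hC' h2p) (inv_pos.mpr (by linarith))
  refine ⟨C' * 2 ^ p * (1 - 2 ^ (p - ν))⁻¹, hKpos, ?_⟩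
  intro t ht
  set s := Real.sqrt t with hsdef
  have hs0 : 0 < s := Real.sqrt_pos.mpr ht
  by_cases hint : Integrable (fun x : M => dist x o ^ (-p)) ((volume : Measure M).restrict (ball o s))
  swap
  · rw [integral_undef hint]
    exact mul_nonneg (mul_nonneg hKpos.le (Real.rpow_nonneg ht.le _)) ENNReal.toReal_nonneg
  have hnn : 0 ≤ᵐ[(volume : Measure M).restrict (ball o s)]
      fun x : M => dist x o ^ (-p) :=
    Filter.Eventually.of_forall fun x => Real.rpow_nonneg dist_nonneg _
  rw [integral_eq_lintegral_of_nonneg_ae hnn hint.aestronglyMeasurable]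
  -- Annuli
  set B : ℕ → Set M := fun k => ball o (s / 2 ^ k) \ ball o (s / 2 ^ (k + 1)) with hB
  -- the ball is covered by {o} and the annuli
  have hcover : ball o s ⊆ {o} ∪ ⋃ k, B k := by
    intro x hx
    rcases eq_or_ne x o with rfl | hxo
    · exact Or.inl rfl
    · have hd0 : 0 < dist x o := dist_pos.mpr hxo
      have hds : dist x o < s := mem_ball.mp hx
      have hex : ∃ k : ℕ, s / 2 ^ (k + 1) ≤ dist x o := by
        obtain ⟨n, hn⟩ := pow_unbounded_of_one_lt (s / dist x o) (one_lt_two (α := ℝ))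
        refine ⟨n, ?_⟩
        rw [div_le_iff₀ (by positivity)]
        rw [div_lt_iff₀ hd0] at hn
        have h2n : (2:ℝ) ^ n ≤ 2 ^ (n + 1) := pow_le_pow_right₀ one_le_two (Nat.le_succ n)
        nlinarith
      refine Or.inr (Set.mem_iUnion.mpr ⟨Nat.find hex, ?_, ?_⟩)
      · rcases Nat.eq_zero_or_pos (Nat.find hex) with h0 | hpos
        · rw [mem_ball, h0]; simpa using hds
        · obtain ⟨m, hm⟩ : ∃ m, Nat.find hex = m + 1 := ⟨Nat.find hex - 1, by omega⟩
          have hmin := Nat.find_min hex (show m < Nat.find hex by omega)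
          rw [mem_ball, hm]
          exact not_le.mp hmin
      · exact fun hmem => (not_le.mpr (mem_ball.mp hmem)) (Nat.find_spec hex)
  have hkpow : ∀ k : ℕ, (0:ℝ) < 2 ^ k := fun k => by positivity
  have hle : ∀ k : ℕ, s / 2 ^ k ≤ s := by
    intro k
    have h1k : (1:ℝ) ≤ 2 ^ k := one_le_pow₀ one_le_two
    rw [div_le_iff₀ (hkpow k)]
    nlinarith
  -- per-annulus measure bound from reverse doubling
  have hballk : ∀ k : ℕ, volume (ball o (s / 2 ^ k)) ≤
      (ENNReal.ofReal (((2:ℝ) ^ k) ^ ν))⁻¹ * (ENNReal.ofReal C' * volume (ball o s)) := by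
    intro k
    have h1 := hRD o s (s / 2 ^ k) (by positivity) (hle k)
    have h2 : s / (s / 2 ^ k) = 2 ^ k := by
      field_simp
    rw [h2] at h1
    have hne : ENNReal.ofReal (((2:ℝ) ^ k) ^ ν) ≠ 0 := by
      simp only [ne_eq, ENNReal.ofReal_eq_zero, not_le]
      exact Real.rpow_pos_of_pos (hkpow k) _
    exact (ENNReal.mul_le_iff_le_inv hne ENNReal.ofReal_ne_top).mp h1
  -- coefficient computation
  have hcoef : ∀ k : ℕ, (s / 2 ^ (k + 1)) ^ (-p) * (((2:ℝ) ^ k) ^ ν)⁻¹ * C'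
      = (C' * s ^ (-p) * 2 ^ p) * ((2:ℝ) ^ (p - ν)) ^ k := by
    intro k
    have ha : ((2:ℝ) ^ (k + 1) : ℝ) ^ (-p) = 2 ^ (-(((k:ℝ) + 1) * p)) := by
      rw [← Real.rpow_natCast 2 (k + 1), ← Real.rpow_mul (by norm_num)]
      congr 1
      push_cast
      ring
    have hb : (((2:ℝ) ^ k : ℝ) ^ ν)⁻¹ = 2 ^ (-((k:ℝ) * ν)) := by
      rw [← Real.rpow_natCast 2 k, ← Real.rpow_mul (by norm_num),
        ← Real.rpow_neg (by norm_num)]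
    have hcpow : ((2:ℝ) ^ (p - ν)) ^ k = 2 ^ ((p - ν) * (k:ℝ)) := by
      rw [← Real.rpow_natCast ((2:ℝ) ^ (p - ν)) k, ← Real.rpow_mul (by norm_num)]
    calc (s / 2 ^ (k + 1)) ^ (-p) * (((2:ℝ) ^ k) ^ ν)⁻¹ * C'
        = s ^ (-p) / 2 ^ (-(((k:ℝ) + 1) * p)) * 2 ^ (-((k:ℝ) * ν)) * C' := by
          rw [Real.div_rpow hs0.le (by positivity), ha, hb]
      _ = C' * s ^ (-p) * (2 ^ (((k:ℝ) + 1) * p) * 2 ^ (-((k:ℝ) * ν))) := by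
          rw [div_eq_mul_inv, ← Real.rpow_neg (by norm_num : (0:ℝ) ≤ 2), neg_neg]
          ring
      _ = C' * s ^ (-p) * 2 ^ ((((k:ℝ) + 1) * p) + (-((k:ℝ) * ν))) := by
          rw [Real.rpow_add two_pos]
      _ = C' * s ^ (-p) * (2 ^ p * 2 ^ ((p - ν) * (k:ℝ))) := by
          rw [← Real.rpow_add two_pos]
          congr 1
          ring
      _ = (C' * s ^ (-p) * 2 ^ p) * ((2:ℝ) ^ (p - ν)) ^ k := by
          rw [hcpow]; ring
  -- the main lintegral estimate
  have key : ∫⁻ x in ball o s, ENNReal.ofReal (dist x o ^ (-p)) ∂volume ≤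
      ENNReal.ofReal ((C' * 2 ^ p * (1 - 2 ^ (p - ν))⁻¹) * s ^ (-p)) * volume (ball o s) := by
    calc ∫⁻ x in ball o s, ENNReal.ofReal (dist x o ^ (-p)) ∂volume
        ≤ ∫⁻ x in ({o} ∪ ⋃ k, B k), ENNReal.ofReal (dist x o ^ (-p)) ∂(volume : Measure M) :=
          lintegral_mono_set hcover
      _ ≤ (∫⁻ x in ({o} : Set M), ENNReal.ofReal (dist x o ^ (-p)) ∂(volume : Measure M))
            + ∫⁻ x in (⋃ k, B k), ENNReal.ofReal (dist x o ^ (-p)) ∂(volume : Measure M) :=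
          lintegral_union_le _ _ _
      _ ≤ 0 + ∑' k, ∫⁻ x in B k, ENNReal.ofReal (dist x o ^ (-p)) ∂(volume : Measure M) := by
          gcongr
          · calc ∫⁻ x in ({o} : Set M), ENNReal.ofReal (dist x o ^ (-p)) ∂(volume : Measure M)
                ≤ ∫⁻ _x in ({o} : Set M), (0 : ENNReal) ∂(volume : Measure M) :=
                  setLIntegral_mono measurable_const (fun x hx => le_of_eq (by
                    rw [Set.mem_singleton_iff.mp hx]
                    simp [Real.zero_rpow hp']))
              _ = 0 := by simp
          · exact lintegral_iUnion_le _ _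
      _ = ∑' k, ∫⁻ x in B k, ENNReal.ofReal (dist x o ^ (-p)) ∂(volume : Measure M) := by
          rw [zero_add]
      _ ≤ ∑' k, ENNReal.ofReal ((C' * s ^ (-p) * 2 ^ p) * ((2:ℝ) ^ (p - ν)) ^ k)
            * volume (ball o s) := by
          refine ENNReal.tsum_le_tsum fun k => ?_
          have hsk : (0:ℝ) < s / 2 ^ (k + 1) := by positivity
          have hpk : (0:ℝ) < ((2:ℝ) ^ k) ^ ν := Real.rpow_pos_of_pos (hkpow k) _
          calc ∫⁻ x in B k, ENNReal.ofReal (dist x o ^ (-p)) ∂(volume : Measure M)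
              ≤ ∫⁻ _x in B k, ENNReal.ofReal ((s / 2 ^ (k + 1)) ^ (-p)) ∂(volume : Measure M) := by
                refine setLIntegral_mono measurable_const fun x hx => ?_
                refine ENNReal.ofReal_le_ofReal ?_
                have hxd : s / 2 ^ (k + 1) ≤ dist x o := by
                  have := hx.2
                  simpa [mem_ball, not_lt] using this
                exact Real.rpow_le_rpow_of_nonpos hsk hxd (by linarith)
            _ = ENNReal.ofReal ((s / 2 ^ (k + 1)) ^ (-p)) * volume (B k) :=
                by rw [setLIntegral_const]
            _ ≤ ENNReal.ofReal ((s / 2 ^ (k + 1)) ^ (-p)) * volume (ball o (s / 2 ^ k)) := by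
                gcongr
                simp only [hB]
                exact Set.diff_subset
            _ ≤ ENNReal.ofReal ((s / 2 ^ (k + 1)) ^ (-p)) *
                  ((ENNReal.ofReal (((2:ℝ) ^ k) ^ ν))⁻¹ *
                    (ENNReal.ofReal C' * volume (ball o s))) := by
                gcongr
                exact hballk k
            _ = ENNReal.ofReal ((C' * s ^ (-p) * 2 ^ p) * ((2:ℝ) ^ (p - ν)) ^ k)
                  * volume (ball o s) := by
                rw [← ENNReal.ofReal_inv_of_pos hpk, ← mul_assoc, ← mul_assoc,
                  ← ENNReal.ofReal_mul (by positivity), ← ENNReal.ofReal_mul (by positivity),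
                  ← hcoef k]
      _ = ENNReal.ofReal (C' * s ^ (-p) * 2 ^ p) *
            (∑' k, (ENNReal.ofReal ((2:ℝ) ^ (p - ν))) ^ k) * volume (ball o s) := by
          rw [ENNReal.tsum_mul_right]
          congr 1
          rw [← ENNReal.tsum_mul_left]
          refine tsum_congr fun k => ?_
          rw [ENNReal.ofReal_mul (by positivity), ENNReal.ofReal_pow hr0.le]
      _ = ENNReal.ofReal ((C' * 2 ^ p * (1 - 2 ^ (p - ν))⁻¹) * s ^ (-p)) * volume (ball o s) := by
          rw [ENNReal.tsum_geometric]
          congr 1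
          rw [show (1 : ENNReal) = ENNReal.ofReal 1 by simp, ← ENNReal.ofReal_sub _ hr0.le,
            ← ENNReal.ofReal_inv_of_pos (by linarith), ← ENNReal.ofReal_mul (by positivity)]
          congr 1
          ring
  have hfin : ENNReal.ofReal ((C' * 2 ^ p * (1 - 2 ^ (p - ν))⁻¹) * s ^ (-p))
      * volume (ball o s) ≠ ⊤ := ENNReal.mul_ne_top ENNReal.ofReal_ne_top (hVfin o s).ne
  have hst : s ^ (-p) = t ^ (-p / 2) := by
    rw [hsdef, Real.sqrt_eq_rpow, ← Real.rpow_mul ht.le]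
    congr 1
    ring
  calc (∫⁻ x in ball o s, ENNReal.ofReal (dist x o ^ (-p)) ∂volume).toReal
      ≤ (ENNReal.ofReal ((C' * 2 ^ p * (1 - 2 ^ (p - ν))⁻¹) * s ^ (-p))
          * volume (ball o s)).toReal := ENNReal.toReal_mono hfin key
    _ = (C' * 2 ^ p * (1 - 2 ^ (p - ν))⁻¹) * s ^ (-p) * (volume (ball o s)).toReal := by
        rw [ENNReal.toReal_mul,
          ENNReal.toReal_ofReal (mul_nonneg hKpos.le (Real.rpow_nonneg hs0.le _))]
    _ = (C' * 2 ^ p * (1 - 2 ^ (p - ν))⁻¹) * t ^ (-p / 2) * (volume (ball o s)).toReal := by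
        rw [hst]
end

section
/- Let n, m ≥ 1 and β ≥ 0. Define on ℝ^n × ℝ^m the quasi-distance ρ((x,y),(x',y')) = |x-x'| + |y-y'| / ((|x|+|x'|)^β + |y-y'|^{β/(β+1)}). Then there exist constants 0 < c₁ < c₂ depending only on n, m, β such that for every (x,y) with x ≠ 0: B_n(x, c₁|x|) × B_m(y, c₁|x|^{β+1}) ⊆ {η : ρ((x,y), η) < |x|} ⊆ B_n(x, c₂|x|) × B_m(y, c₂|x|^{β+1}), where B_n, B_m denote Euclidean balls in ℝ^n, ℝ^m. -/
/-!
Near `(x, y)` with `r = ‖x‖ > 0`, the denominator of `ρ` is at least `r ^ β`, so the product box of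
size `r × r ^ (β + 1)` (with constant `1/2`) lies in the `ρ`-ball of radius `r`. Conversely, in that
`ρ`-ball `‖x'‖ < 2r`, so with `d = ‖y - y'‖` and `s = d ^ (1 / (β + 1))` the condition `d / D < r`
becomes `s ^ (β + 1) < r (3 ^ β r ^ β + s ^ β)`, which forces `s < (3 ^ β + 1) r`.
-/

open Metric

lemma rpow_le_add_rpow_add_rpow {a b d β : ℝ} (ha : 0 ≤ a) (hb : 0 ≤ b) (hd : 0 ≤ d)
    (hβ : 0 ≤ β) : a ^ β ≤ (a + b) ^ β + d ^ (β / (β + 1)) := by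
  have hab : a ^ β ≤ (a + b) ^ β := Real.rpow_le_rpow ha (le_add_of_nonneg_right hb) hβ
  linarith [Real.rpow_nonneg hd (β / (β + 1))]

lemma lt_mul_of_rpow_add_one_lt {r s A β : ℝ} (hr : 0 < r) (hA : 0 ≤ A)
    (hβ : 0 ≤ β) (h : s ^ (β + 1) < r * (A * r ^ β + s ^ β)) : s < (A + 1) * r := by
  by_contra! hle
  have hrs : r ≤ s := le_trans (by nlinarith) hle
  have hspos : 0 < s := hr.trans_le hrs
  have hsβ : 0 < s ^ β := Real.rpow_pos_of_pos hspos β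
  have hrsβ : r ^ β ≤ s ^ β := Real.rpow_le_rpow hr.le hrs hβ
  rw [Real.rpow_add_one hspos.ne'] at h
  have : r * (A * r ^ β + s ^ β) ≤ (A + 1) * r * s ^ β :=
    calc _ ≤ r * (A * s ^ β + s ^ β) := by gcongr
      _ = _ := by ring
  nlinarith

/-- The substitution `s = d ^ (1 / (β + 1))` turns the hypothesis into that of
`lt_mul_of_rpow_add_one_lt`. -/
lemma lt_rpow_of_lt_mul_add_rpow {r d A β : ℝ} (hr : 0 < r) (hd : 0 ≤ d) (hA : 0 ≤ A)
    (hβ : 0 ≤ β) (h : d < r * (A * r ^ β + d ^ (β / (β + 1)))) : d < ((A + 1) * r) ^ (β + 1) := by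
  have hβ1 : β + 1 ≠ 0 := by positivity
  set s := d ^ (β + 1)⁻¹ with hs_def
  have hs : 0 ≤ s := Real.rpow_nonneg hd _
  have hsd : s ^ (β + 1) = d := Real.rpow_inv_rpow hd hβ1
  have hsβ : s ^ β = d ^ (β / (β + 1)) := by
    rw [hs_def, ← Real.rpow_mul hd, inv_mul_eq_div]
  rw [← hsβ] at h
  rw [← hsd] at h ⊢
  exact Real.rpow_lt_rpow hs (lt_mul_of_rpow_add_one_lt hr hA hβ h) (by positivity)

section Grushin

variable {E F : Type*} [SeminormedAddCommGroup E] [SeminormedAddCommGroup F] {β : ℝ}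

noncomputable def grushinQuasiDist (β : ℝ) (p q : E × F) : ℝ :=
  ‖p.1 - q.1‖ + ‖p.2 - q.2‖ / ((‖p.1‖ + ‖q.1‖) ^ β + ‖p.2 - q.2‖ ^ (β / (β + 1)))

lemma prod_ball_subset_grushinBall (hβ : 0 ≤ β) {x : E} (hx : 0 < ‖x‖) (y : F) :
    ball x (2⁻¹ * ‖x‖) ×ˢ ball y (2⁻¹ * ‖x‖ ^ (β + 1)) ⊆
      {η | grushinQuasiDist β (x, y) η < ‖x‖} := by
  rintro ⟨x', y'⟩ ⟨hx', hy'⟩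
  rw [mem_ball, dist_comm, dist_eq_norm] at hx' hy'
  have hxβ : 0 < ‖x‖ ^ β := Real.rpow_pos_of_pos hx β
  have hden : ‖x‖ ^ β ≤ (‖x‖ + ‖x'‖) ^ β + ‖y - y'‖ ^ (β / (β + 1)) :=
    rpow_le_add_rpow_add_rpow hx.le (norm_nonneg _) (norm_nonneg _) hβ
  have hfrac : ‖y - y'‖ / ((‖x‖ + ‖x'‖) ^ β + ‖y - y'‖ ^ (β / (β + 1))) < 2⁻¹ * ‖x‖ :=
    calc _ ≤ ‖y - y'‖ / ‖x‖ ^ β := by gcongr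
      _ < 2⁻¹ * ‖x‖ ^ (β + 1) / ‖x‖ ^ β := by gcongr
      _ = 2⁻¹ * ‖x‖ := by
        rw [Real.rpow_add_one hx.ne']
        field_simp
  show ‖x - x'‖ + _ < ‖x‖
  linarith

lemma grushinBall_subset_prod_ball (hβ : 0 ≤ β) {x : E} (hx : 0 < ‖x‖) (y : F) :
    {η | grushinQuasiDist β (x, y) η < ‖x‖} ⊆
      ball x ‖x‖ ×ˢ ball y ((3 ^ β + 1) ^ (β + 1) * ‖x‖ ^ (β + 1)) := by
  rintro ⟨x', y'⟩ hρ
  change ‖x - x'‖ + ‖y - y'‖ / ((‖x‖ + ‖x'‖) ^ β + ‖y - y'‖ ^ (β / (β + 1))) < ‖x‖ at hρ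
  set d := ‖y - y'‖
  set D := (‖x‖ + ‖x'‖) ^ β + d ^ (β / (β + 1))
  have hD : 0 < D := (Real.rpow_pos_of_pos hx β).trans_le
    (rpow_le_add_rpow_add_rpow hx.le (norm_nonneg _) (norm_nonneg _) hβ)
  have hxx' : ‖x - x'‖ < ‖x‖ := by linarith [div_nonneg (norm_nonneg (y - y')) hD.le]
  have hD_le : D ≤ 3 ^ β * ‖x‖ ^ β + d ^ (β / (β + 1)) := by
    have : ‖x‖ + ‖x'‖ ≤ 3 * ‖x‖ := by linarith [norm_le_norm_add_norm_sub x x']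
    show (‖x‖ + ‖x'‖) ^ β + _ ≤ _
    rw [← Real.mul_rpow (by norm_num) hx.le]
    gcongr
  have hd : d < ‖x‖ * (3 ^ β * ‖x‖ ^ β + d ^ (β / (β + 1))) :=
    have hdD : d / D < ‖x‖ := by linarith [norm_nonneg (x - x')]
    calc d < ‖x‖ * D := (div_lt_iff₀ hD).mp hdD
      _ ≤ _ := by gcongr
  refine ⟨?_, ?_⟩
  · rwa [mem_ball, dist_comm, dist_eq_norm]
  · rw [mem_ball, dist_comm, dist_eq_norm, ← Real.mul_rpow (by positivity) hx.le]
    exact lt_rpow_of_lt_mul_add_rpow hx (norm_nonneg _) (by positivity) hβ hd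

end Grushin

theorem stmt_8_general (n m : ℕ) (β : ℝ) (hβ : 0 ≤ β) :
    ∃ c₁ c₂ : ℝ, 0 < c₁ ∧ c₁ < c₂ ∧
      ∀ (x : EuclideanSpace ℝ (Fin n)) (y : EuclideanSpace ℝ (Fin m)), x ≠ 0 →
        (ball x (c₁ * ‖x‖)) ×ˢ (ball y (c₁ * ‖x‖ ^ (β + 1))) ⊆
            {η : EuclideanSpace ℝ (Fin n) × EuclideanSpace ℝ (Fin m) |
              ‖x - η.1‖ + ‖y - η.2‖ /
                ((‖x‖ + ‖η.1‖) ^ β + ‖y - η.2‖ ^ (β / (β + 1))) < ‖x‖} ∧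
          {η : EuclideanSpace ℝ (Fin n) × EuclideanSpace ℝ (Fin m) |
              ‖x - η.1‖ + ‖y - η.2‖ /
                ((‖x‖ + ‖η.1‖) ^ β + ‖y - η.2‖ ^ (β / (β + 1))) < ‖x‖} ⊆
            (ball x (c₂ * ‖x‖)) ×ˢ (ball y (c₂ * ‖x‖ ^ (β + 1))) := by
  set C := ((3 : ℝ) ^ β + 1) ^ (β + 1)
  have hC : 1 ≤ C :=
    Real.one_le_rpow (by linarith [Real.rpow_nonneg (zero_le_three (α := ℝ)) β]) (by linarith)
  refine ⟨2⁻¹, C, by norm_num, by linarith, fun x y hx ↦ ?_⟩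
  have hx : 0 < ‖x‖ := norm_pos_iff.mpr hx
  refine ⟨prod_ball_subset_grushinBall hβ hx y, ?_⟩
  refine (grushinBall_subset_prod_ball hβ hx y).trans (Set.prod_mono ?_ le_rfl)
  exact ball_subset_ball (le_mul_of_one_le_left hx.le hC)

/-- Grushin balls are comparable to Euclidean product boxes: with
`ρ((x,y),(x',y')) = |x-x'| + |y-y'| / ((|x|+|x'|)^β + |y-y'|^{β/(β+1)})`,
for every `(x,y)` with `x ≠ 0`,
`Bₙ(x,c₁|x|) × Bₘ(y,c₁|x|^{β+1}) ⊆ {ρ < |x|} ⊆ Bₙ(x,c₂|x|) × Bₘ(y,c₂|x|^{β+1})`. -/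
theorem stmt_8 (n m : ℕ) (hn : 1 ≤ n) (hm : 1 ≤ m) (β : ℝ) (hβ : 0 ≤ β) :
    ∃ c₁ c₂ : ℝ, 0 < c₁ ∧ c₁ < c₂ ∧
      ∀ (x : EuclideanSpace ℝ (Fin n)) (y : EuclideanSpace ℝ (Fin m)), x ≠ 0 →
        (ball x (c₁ * ‖x‖)) ×ˢ (ball y (c₁ * ‖x‖ ^ (β + 1))) ⊆
            {η : EuclideanSpace ℝ (Fin n) × EuclideanSpace ℝ (Fin m) |
              ‖x - η.1‖ + ‖y - η.2‖ /
                ((‖x‖ + ‖η.1‖) ^ β + ‖y - η.2‖ ^ (β / (β + 1))) < ‖x‖} ∧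
          {η : EuclideanSpace ℝ (Fin n) × EuclideanSpace ℝ (Fin m) |
              ‖x - η.1‖ + ‖y - η.2‖ /
                ((‖x‖ + ‖η.1‖) ^ β + ‖y - η.2‖ ^ (β / (β + 1))) < ‖x‖} ⊆
            (ball x (c₂ * ‖x‖)) ×ˢ (ball y (c₂ * ‖x‖ ^ (β + 1))) :=
  stmt_8_general n m β hβ
end

section
/- Let (E, μ) be a σ-finite measure space, q ∈ (0, ∞), and f a nonnegative measurable function with ∫ f^q dμ < ∞. For k ∈ ℤ set f_k = min(max(f - 2^k, 0), 2^k). Then Σ_{k ∈ ℤ} 2^{kq} μ({f_k ≥ 2^k · (1/2)}) ≥ c_q ∫ f^q dμ and Σ_{k ∈ ℤ} 2^{kq} μ({f ≥ 2^{k+1}}) ≤ C_q ∫ f^q dμ, i.e. the dyadic truncations satisfy Σ_k ‖f_k‖_q^q ≍ ‖f‖_q^q up to constants depending only on q. -/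
open MeasureTheory

/-- Dyadic truncation layer-cake comparison: for `f ≥ 0` with `∫ f^q dμ < ∞` and
`f_k = min(max(f - 2^k, 0), 2^k)`, one has
`c_q ∫ f^q ≤ Σ_k 2^{kq} μ({f_k ≥ 2^{k}/2})` and
`Σ_k 2^{kq} μ({f ≥ 2^{k+1}}) ≤ C_q ∫ f^q`. -/
theorem stmt_10 (q : ℝ) (hq : 0 < q) :
    ∃ c C : ℝ, 0 < c ∧ 0 < C ∧
      ∀ (α : Type) (_ : MeasurableSpace α) (μ : Measure α), SigmaFinite μ →
        ∀ f : α → ℝ, Measurable f → (∀ x, 0 ≤ f x) →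
          (∫⁻ x, ENNReal.ofReal (f x ^ q) ∂μ) < ⊤ →
          (ENNReal.ofReal c * ∫⁻ x, ENNReal.ofReal (f x ^ q) ∂μ ≤
            ∑' k : ℤ, ENNReal.ofReal ((2 : ℝ) ^ ((k : ℝ) * q)) *
              μ {x | (2 : ℝ) ^ k * (1 / 2) ≤
                  min (max (f x - (2 : ℝ) ^ k) 0) ((2 : ℝ) ^ k)}) ∧
          (∑' k : ℤ, ENNReal.ofReal ((2 : ℝ) ^ ((k : ℝ) * q)) *
              μ {x | (2 : ℝ) ^ (k + 1) ≤ f x} ≤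
            ENNReal.ofReal C * ∫⁻ x, ENNReal.ofReal (f x ^ q) ∂μ) := by
  have h2 : (1:ℝ) < 2 := one_lt_two
  have h2q : (0:ℝ) < (2:ℝ) ^ (-q) := Real.rpow_pos_of_pos two_pos _
  have h2q1 : (2:ℝ) ^ (-q) < 1 :=
    Real.rpow_lt_one_of_one_lt_of_neg h2 (neg_neg_of_pos hq)
  refine ⟨(2:ℝ) ^ (-(2*q)), (1 - (2:ℝ) ^ (-q))⁻¹,
    Real.rpow_pos_of_pos two_pos _, inv_pos.mpr (sub_pos.mpr h2q1), ?_⟩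
  intro α mα μ _ f hf hf0 _
  have hzpos : ∀ m : ℤ, (0:ℝ) < (2:ℝ) ^ m := fun m => zpow_pos two_pos m
  have hconv : ∀ m : ℤ, (2:ℝ) ^ ((m:ℝ) * q) = ((2:ℝ) ^ m) ^ q := by
    intro m
    rw [Real.rpow_mul (by norm_num : (0:ℝ) ≤ 2), Real.rpow_intCast]
  set A : ℤ → Set α := fun j => {x | (2:ℝ) ^ j ≤ f x ∧ f x < (2:ℝ) ^ (j+1)} with hAdef
  have hA : ∀ j, MeasurableSet (A j) := by
    intro j
    have : A j = f ⁻¹' (Set.Ico ((2:ℝ)^j) ((2:ℝ)^(j+1))) := rfl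
    rw [this]; exact hf measurableSet_Ico
  have hdisj : Pairwise (Function.onFun Disjoint A) := by
    intro i j hij
    refine Set.disjoint_left.mpr ?_
    rintro x ⟨hx1, hx2⟩ ⟨hy1, hy2⟩
    rcases lt_or_gt_of_ne hij with h | h
    · exact absurd (lt_of_lt_of_le hx2
        (zpow_le_zpow_right₀ one_le_two (by omega : i+1 ≤ j))) (not_lt.mpr hy1)
    · exact absurd (lt_of_lt_of_le hy2
        (zpow_le_zpow_right₀ one_le_two (by omega : j+1 ≤ i))) (not_lt.mpr hx1)
  have hmem : ∀ x, 0 < f x → ∃ j, x ∈ A j := by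
    intro x hx
    obtain ⟨j, hj⟩ := exists_mem_Ico_zpow hx h2
    exact ⟨j, hj.1, hj.2⟩
  have hU : MeasurableSet (⋃ j, A j) := MeasurableSet.iUnion hA
  have hsum : ∫⁻ x, ENNReal.ofReal (f x ^ q) ∂μ
      = ∑' j : ℤ, ∫⁻ x in A j, ENNReal.ofReal (f x ^ q) ∂μ := by
    have hz : ∫⁻ x in (⋃ j, A j)ᶜ, ENNReal.ofReal (f x ^ q) ∂μ = 0 := by
      have hzero : ∀ x ∈ (⋃ j, A j)ᶜ, ENNReal.ofReal (f x ^ q) = (0:ENNReal) := by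
        intro x hx
        have hfx : f x = 0 := by
          by_contra h
          exact hx (Set.mem_iUnion.mpr (hmem x (lt_of_le_of_ne (hf0 x) (Ne.symm h))))
        rw [hfx, Real.zero_rpow hq.ne', ENNReal.ofReal_zero]
      rw [setLIntegral_congr_fun hU.compl hzero, lintegral_zero]
    rw [← lintegral_add_compl (fun x => ENNReal.ofReal (f x ^ q)) hU, hz, add_zero,
      lintegral_iUnion hA hdisj]
  have hmeasq : Measurable fun x => ENNReal.ofReal (f x ^ q) := by fun_prop
  have hup : ∀ j : ℤ, ∫⁻ x in A j, ENNReal.ofReal (f x ^ q) ∂μ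
      ≤ ENNReal.ofReal (((2:ℝ) ^ (j+1)) ^ q) * μ (A j) := by
    intro j
    rw [← setLIntegral_const]
    exact setLIntegral_mono measurable_const fun x hx =>
      ENNReal.ofReal_le_ofReal (Real.rpow_le_rpow (hf0 x) hx.2.le hq.le)
  have hlow : ∀ j : ℤ, ENNReal.ofReal (((2:ℝ) ^ j) ^ q) * μ (A j)
      ≤ ∫⁻ x in A j, ENNReal.ofReal (f x ^ q) ∂μ := by
    intro j
    rw [← setLIntegral_const]
    exact setLIntegral_mono hmeasq fun x hx =>
      ENNReal.ofReal_le_ofReal (Real.rpow_le_rpow (hzpos j).le hx.1 hq.le)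
  constructor
  · -- lower bound
    have hsub : ∀ k : ℤ, A (k+1) ⊆
        {x | (2:ℝ)^k * (1/2) ≤ min (max (f x - (2:ℝ)^k) 0) ((2:ℝ)^k)} := by
      intro k x hx
      have hk := hzpos k
      have h1 : (2:ℝ)^k * (1/2) ≤ (2:ℝ)^k := by nlinarith
      have hfx : (2:ℝ)^(k+1) ≤ f x := hx.1
      have h2k : (2:ℝ)^(k+1) = (2:ℝ)^k * 2 := zpow_add_one₀ two_ne_zero k
      have h3 : (2:ℝ)^k * (1/2) ≤ f x - (2:ℝ)^k := by nlinarith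
      exact le_min (h3.trans (le_max_left _ _)) h1
    have hw1 : ∀ j : ℤ, ENNReal.ofReal ((2:ℝ) ^ (((j - 1 : ℤ) : ℝ) * q))
        = ENNReal.ofReal ((2:ℝ)^(-q)) * ENNReal.ofReal ((2:ℝ) ^ ((j:ℝ) * q)) := by
      intro j
      rw [← ENNReal.ofReal_mul h2q.le, ← Real.rpow_add two_pos]
      congr 1
      push_cast
      ring
    have hw2 : ∀ j : ℤ, ENNReal.ofReal (((2:ℝ) ^ (j+1)) ^ q)
        = ENNReal.ofReal ((2:ℝ)^q) * ENNReal.ofReal ((2:ℝ) ^ ((j:ℝ) * q)) := by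
      intro j
      rw [← hconv (j+1), ← ENNReal.ofReal_mul (Real.rpow_nonneg (by norm_num) _),
        ← Real.rpow_add two_pos]
      congr 1
      push_cast
      ring
    calc ENNReal.ofReal ((2:ℝ) ^ (-(2*q))) * ∫⁻ x, ENNReal.ofReal (f x ^ q) ∂μ
        = ENNReal.ofReal ((2:ℝ) ^ (-(2*q))) *
            ∑' j : ℤ, ∫⁻ x in A j, ENNReal.ofReal (f x ^ q) ∂μ := by rw [hsum]
      _ ≤ ENNReal.ofReal ((2:ℝ) ^ (-(2*q))) *
            ∑' j : ℤ, (ENNReal.ofReal ((2:ℝ)^q) *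
              ENNReal.ofReal ((2:ℝ) ^ ((j:ℝ) * q))) * μ (A j) := by
          refine mul_le_mul_right (Summable.tsum_le_tsum (fun j => ?_)
            ENNReal.summable ENNReal.summable) _
          exact (hup j).trans_eq (by rw [hw2 j])
      _ = ENNReal.ofReal ((2:ℝ) ^ (-q)) *
            ∑' j : ℤ, ENNReal.ofReal ((2:ℝ) ^ ((j:ℝ) * q)) * μ (A j) := by
          simp only [mul_assoc]
          rw [ENNReal.tsum_mul_left, ← mul_assoc, ← ENNReal.ofReal_mul
            (Real.rpow_nonneg (by norm_num) _), ← Real.rpow_add two_pos,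
            show -(2*q) + q = -q by ring]
      _ = ∑' j : ℤ, ENNReal.ofReal ((2:ℝ) ^ (((j - 1 : ℤ) : ℝ) * q)) * μ (A j) := by
          rw [← ENNReal.tsum_mul_left]
          exact tsum_congr fun j => by rw [hw1 j, mul_assoc]
      _ = ∑' k : ℤ, ENNReal.ofReal ((2:ℝ) ^ ((k:ℝ) * q)) * μ (A (k+1)) := by
          rw [← (Equiv.addRight (1:ℤ)).tsum_eq
            (fun j => ENNReal.ofReal ((2:ℝ) ^ (((j - 1 : ℤ) : ℝ) * q)) * μ (A j))]
          exact tsum_congr fun k => by simp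
      _ ≤ ∑' k : ℤ, ENNReal.ofReal ((2 : ℝ) ^ ((k : ℝ) * q)) *
            μ {x | (2 : ℝ) ^ k * (1 / 2) ≤
                min (max (f x - (2 : ℝ) ^ k) 0) ((2 : ℝ) ^ k)} := by
          exact Summable.tsum_le_tsum (fun k => mul_le_mul_right
            (measure_mono (hsub k)) _) ENNReal.summable ENNReal.summable
  · -- upper bound
    set B : ℤ → Set α := fun k => {x | (2:ℝ) ^ (k+1) ≤ f x} with hBdef
    have hBmeas : ∀ k : ℤ, MeasurableSet (B k) := by
      intro k
      have : B k = f ⁻¹' (Set.Ici ((2:ℝ)^(k+1))) := rfl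
      rw [this]; exact hf measurableSet_Ici
    have hB : ∀ k : ℤ, μ (B k) = ∑' j : ℤ, μ (A j ∩ B k) := by
      intro k
      have hBsub : B k ⊆ ⋃ j, A j := fun x hx =>
        Set.mem_iUnion.mpr (hmem x (lt_of_lt_of_le (hzpos (k+1)) hx))
      have hcup : B k = ⋃ j, A j ∩ B k := by
        rw [← Set.iUnion_inter, Set.inter_eq_right.mpr hBsub]
      conv_lhs => rw [hcup]
      have hdisj2 : Pairwise (Function.onFun Disjoint fun j => A j ∩ B k) := by
        intro i i' hii'
        exact (hdisj hii').mono Set.inter_subset_left Set.inter_subset_left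
      exact measure_iUnion hdisj2 (fun j => (hA j).inter (hBmeas k))
    have hgeom : ∑' n : ℕ, (ENNReal.ofReal ((2:ℝ)^(-q)))^(n+1)
        ≤ ENNReal.ofReal ((1 - (2:ℝ) ^ (-q))⁻¹) := by
      have hρ1 : ENNReal.ofReal ((2:ℝ)^(-q)) ≤ 1 := by
        rw [← ENNReal.ofReal_one]
        exact ENNReal.ofReal_le_ofReal h2q1.le
      have hle : ∑' n : ℕ, (ENNReal.ofReal ((2:ℝ)^(-q)))^(n+1)
          ≤ ∑' n : ℕ, (ENNReal.ofReal ((2:ℝ)^(-q)))^n := by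
        refine Summable.tsum_le_tsum (fun n => ?_) ENNReal.summable ENNReal.summable
        rw [pow_succ]
        calc (ENNReal.ofReal ((2:ℝ)^(-q)))^n * ENNReal.ofReal ((2:ℝ)^(-q))
            ≤ (ENNReal.ofReal ((2:ℝ)^(-q)))^n * 1 := mul_le_mul_right hρ1 _
          _ = (ENNReal.ofReal ((2:ℝ)^(-q)))^n := mul_one _
      rw [ENNReal.tsum_geometric] at hle
      refine hle.trans (le_of_eq ?_)
      rw [ENNReal.ofReal_inv_of_pos (sub_pos.mpr h2q1), ENNReal.ofReal_sub _ h2q.le,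
        ENNReal.ofReal_one]
    have hinner : ∀ j : ℤ, (∑' k : ℤ, ENNReal.ofReal ((2:ℝ) ^ ((k:ℝ) * q)) * μ (A j ∩ B k))
        ≤ ENNReal.ofReal ((1 - (2:ℝ) ^ (-q))⁻¹) *
            (ENNReal.ofReal ((2:ℝ) ^ ((j:ℝ) * q)) * μ (A j)) := by
      intro j
      have hbij : (∑' k : ℤ, ENNReal.ofReal ((2:ℝ) ^ ((k:ℝ) * q)) * μ (A j ∩ B k))
          = ∑' n : ℕ, ENNReal.ofReal ((2:ℝ) ^ (((j - 1 - (n:ℤ) : ℤ):ℝ) * q)) *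
              μ (A j ∩ B (j - 1 - (n:ℤ))) := by
        refine (Function.Injective.tsum_eq (g := fun n : ℕ => j - 1 - (n:ℤ))
          (fun a b h => by dsimp only at h; omega) ?_).symm
        intro k hk
        simp only [Function.mem_support] at hk
        have hne : (A j ∩ B k).Nonempty := by
          by_contra h
          rw [Set.not_nonempty_iff_eq_empty] at h
          rw [h] at hk
          simp at hk
        obtain ⟨x, hx1, hx2⟩ := hne
        have hkj : k < j := by
          have hlt : (2:ℝ)^(k+1) < (2:ℝ)^(j+1) := lt_of_le_of_lt hx2 hx1.2
          have := (zpow_lt_zpow_iff_right₀ h2).mp hlt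
          omega
        refine ⟨(j - 1 - k).toNat, ?_⟩
        show j - 1 - ((j - 1 - k).toNat : ℤ) = k
        omega
      have hwn : ∀ n : ℕ, ENNReal.ofReal ((2:ℝ) ^ (((j - 1 - (n:ℤ) : ℤ):ℝ) * q))
          = ENNReal.ofReal ((2:ℝ) ^ ((j:ℝ) * q)) *
              (ENNReal.ofReal ((2:ℝ)^(-q)))^(n+1) := by
        intro n
        rw [← ENNReal.ofReal_pow h2q.le, ← ENNReal.ofReal_mul
          (Real.rpow_nonneg (by norm_num) _)]
        congr 1
        rw [← Real.rpow_natCast ((2:ℝ)^(-q)) (n+1),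
          ← Real.rpow_mul (by norm_num : (0:ℝ) ≤ 2), ← Real.rpow_add two_pos]
        congr 1
        push_cast
        ring
      rw [hbij]
      calc (∑' n : ℕ, ENNReal.ofReal ((2:ℝ) ^ (((j - 1 - (n:ℤ) : ℤ):ℝ) * q)) *
              μ (A j ∩ B (j - 1 - (n:ℤ))))
          ≤ ∑' n : ℕ, (ENNReal.ofReal ((2:ℝ) ^ ((j:ℝ) * q)) * μ (A j)) *
              (ENNReal.ofReal ((2:ℝ)^(-q)))^(n+1) := by
            refine Summable.tsum_le_tsum (fun n => ?_) ENNReal.summable ENNReal.summable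
            rw [hwn n]
            calc ENNReal.ofReal ((2:ℝ) ^ ((j:ℝ) * q)) *
                  (ENNReal.ofReal ((2:ℝ)^(-q)))^(n+1) * μ (A j ∩ B (j - 1 - (n:ℤ)))
                ≤ ENNReal.ofReal ((2:ℝ) ^ ((j:ℝ) * q)) *
                  (ENNReal.ofReal ((2:ℝ)^(-q)))^(n+1) * μ (A j) :=
                  mul_le_mul_right (measure_mono Set.inter_subset_left) _
              _ = (ENNReal.ofReal ((2:ℝ) ^ ((j:ℝ) * q)) * μ (A j)) *
                  (ENNReal.ofReal ((2:ℝ)^(-q)))^(n+1) := by ring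
        _ = (ENNReal.ofReal ((2:ℝ) ^ ((j:ℝ) * q)) * μ (A j)) *
              ∑' n : ℕ, (ENNReal.ofReal ((2:ℝ)^(-q)))^(n+1) := ENNReal.tsum_mul_left
        _ ≤ (ENNReal.ofReal ((2:ℝ) ^ ((j:ℝ) * q)) * μ (A j)) *
              ENNReal.ofReal ((1 - (2:ℝ) ^ (-q))⁻¹) := mul_le_mul_right hgeom _
        _ = ENNReal.ofReal ((1 - (2:ℝ) ^ (-q))⁻¹) *
              (ENNReal.ofReal ((2:ℝ) ^ ((j:ℝ) * q)) * μ (A j)) := mul_comm _ _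
    calc (∑' k : ℤ, ENNReal.ofReal ((2 : ℝ) ^ ((k : ℝ) * q)) * μ {x | (2 : ℝ) ^ (k + 1) ≤ f x})
        = ∑' k : ℤ, ∑' j : ℤ, ENNReal.ofReal ((2:ℝ) ^ ((k:ℝ) * q)) * μ (A j ∩ B k) := by
          exact tsum_congr fun k => by rw [show μ {x | (2 : ℝ) ^ (k + 1) ≤ f x} = μ (B k) from rfl,
            hB k, ENNReal.tsum_mul_left]
      _ = ∑' j : ℤ, ∑' k : ℤ, ENNReal.ofReal ((2:ℝ) ^ ((k:ℝ) * q)) * μ (A j ∩ B k) :=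
          ENNReal.tsum_comm
      _ ≤ ∑' j : ℤ, ENNReal.ofReal ((1 - (2:ℝ) ^ (-q))⁻¹) *
            (ENNReal.ofReal ((2:ℝ) ^ ((j:ℝ) * q)) * μ (A j)) :=
          Summable.tsum_le_tsum hinner ENNReal.summable ENNReal.summable
      _ = ENNReal.ofReal ((1 - (2:ℝ) ^ (-q))⁻¹) *
            ∑' j : ℤ, ENNReal.ofReal ((2:ℝ) ^ ((j:ℝ) * q)) * μ (A j) :=
          ENNReal.tsum_mul_left
      _ ≤ ENNReal.ofReal ((1 - (2:ℝ) ^ (-q))⁻¹) *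
            ∑' j : ℤ, ∫⁻ x in A j, ENNReal.ofReal (f x ^ q) ∂μ := by
          refine mul_le_mul_right (Summable.tsum_le_tsum (fun j => ?_)
            ENNReal.summable ENNReal.summable) _
          rw [hconv j]
          exact hlow j
      _ = ENNReal.ofReal ((1 - (2:ℝ) ^ (-q))⁻¹) *
            ∫⁻ x, ENNReal.ofReal (f x ^ q) ∂μ := by rw [← hsum]
end

section
/- Let β ≥ 0, n, m ≥ 1 and Q = n + m(β+1). Suppose f is smooth with Γ(f) = |∇_x f|² + |x|^{2β}|∇_y f|² and L f = -Δ_x f - |x|^{2β} Δ_y f. Then for x ≠ 0 and every ε > 0: Γ₂(f) ≥ (S_xx + 2|x|^{2β} S_xy + |x|^{4β} S_yy)/2 - c(n,m,β,ε)|x|^{-2} Γ(f) - ε (Lf)², where S_xx, S_xy, S_yy are as in the Γ₂ formula. Consequently, choosing ε small and using (Lf)² ≤ (n+m)(S_xx + 2|x|^{2β}S_xy + |x|^{4β}S_yy), there exist c₁, c₂ > 0 depending only on n, m, β with Γ₂(f) ≥ -c₁|x|^{-2} Γ(f) + c₂ (Lf)². -/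
open scoped BigOperators

noncomputable section

/-- Partial derivative in the `i`-th `x`-direction. -/
def pdx {n m : ℕ} (i : Fin n)
    (f : EuclideanSpace ℝ (Fin n) × EuclideanSpace ℝ (Fin m) → ℝ) :
    EuclideanSpace ℝ (Fin n) × EuclideanSpace ℝ (Fin m) → ℝ :=
  fun p => fderiv ℝ f p (EuclideanSpace.single i 1, 0)

/-- Partial derivative in the `j`-th `y`-direction. -/
def pdy {n m : ℕ} (j : Fin m)
    (f : EuclideanSpace ℝ (Fin n) × EuclideanSpace ℝ (Fin m) → ℝ) :
    EuclideanSpace ℝ (Fin n) × EuclideanSpace ℝ (Fin m) → ℝ :=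
  fun p => fderiv ℝ f p (0, EuclideanSpace.single j 1)

/-- The Grushin carré du champ `Γ(f,g)`. -/
def gammaG {n m : ℕ} (β : ℝ)
    (f g : EuclideanSpace ℝ (Fin n) × EuclideanSpace ℝ (Fin m) → ℝ) :
    EuclideanSpace ℝ (Fin n) × EuclideanSpace ℝ (Fin m) → ℝ :=
  fun p => (∑ i, pdx i f p * pdx i g p) +
    ‖p.1‖ ^ (2 * β) * ∑ j, pdy j f p * pdy j g p

/-- `𝓛 = -L = Δₓ + |x|^{2β} Δ_y`. -/
def calL {n m : ℕ} (β : ℝ)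
    (f : EuclideanSpace ℝ (Fin n) × EuclideanSpace ℝ (Fin m) → ℝ) :
    EuclideanSpace ℝ (Fin n) × EuclideanSpace ℝ (Fin m) → ℝ :=
  fun p => (∑ i, pdx i (pdx i f) p) + ‖p.1‖ ^ (2 * β) * ∑ j, pdy j (pdy j f) p

/-- `Γ₂(f) = ½ 𝓛Γ(f) - Γ(f, 𝓛f)`. -/
def gamma2 {n m : ℕ} (β : ℝ)
    (f : EuclideanSpace ℝ (Fin n) × EuclideanSpace ℝ (Fin m) → ℝ) :
    EuclideanSpace ℝ (Fin n) × EuclideanSpace ℝ (Fin m) → ℝ :=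
  fun p => (1 / 2) * calL β (gammaG β f f) p - gammaG β f (calL β f) p


abbrev Pt (n m : ℕ) := EuclideanSpace ℝ (Fin n) × EuclideanSpace ℝ (Fin m)

variable {n m : ℕ}

def Dd (v : Pt n m) (f : Pt n m → ℝ) : Pt n m → ℝ := fun q => fderiv ℝ f q v

def exv (i : Fin n) : Pt n m := (EuclideanSpace.single i 1, 0)
def eyv (j : Fin m) : Pt n m := (0, EuclideanSpace.single j 1)

def Xl (i : Fin n) : Pt n m →L[ℝ] ℝ :=
  (EuclideanSpace.proj i).comp (ContinuousLinearMap.fst ℝ _ _)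

theorem Xl_apply (i : Fin n) (q : Pt n m) : Xl i q = q.1 i := rfl

def uu : Pt n m → ℝ := fun q => ∑ i, q.1 i * q.1 i

theorem uu_cd : ContDiff ℝ (⊤ : ℕ∞) (uu : Pt n m → ℝ) := by
  have : (uu : Pt n m → ℝ) = fun q => ∑ i, Xl i q * Xl i q := rfl
  rw [this]
  exact ContDiff.sum fun i _ => ((Xl i).contDiff).mul ((Xl i).contDiff)

theorem uu_eq_norm (q : Pt n m) : uu q = ‖q.1‖ ^ (2:ℕ) := by
  rw [EuclideanSpace.norm_eq, Real.sq_sqrt (by positivity)]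
  unfold uu
  congr 1; funext i; rw [Real.norm_eq_abs]; rw [sq_abs]; ring

theorem uu_pos {q : Pt n m} (h : q.1 ≠ 0) : 0 < uu q := by
  rw [uu_eq_norm]
  have : 0 < ‖q.1‖ := norm_pos_iff.mpr h
  positivity

theorem norm_rpow_eq (γ : ℝ) (q : Pt n m) : ‖q.1‖ ^ (2 * γ) = uu q ^ γ := by
  rw [Real.rpow_mul (norm_nonneg _), uu_eq_norm]
  norm_num

/-- derivative of `q ↦ (g q) ^ β` (rpow) at a point where `g q ≠ 0`. -/
theorem Dd_rpow {g : Pt n m → ℝ} {p : Pt n m} (hg : DifferentiableAt ℝ g p) (hne : g p ≠ 0)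
    (β : ℝ) (v : Pt n m) :
    Dd v (fun q => g q ^ β) p = β * g p ^ (β - 1) * Dd v g p := by
  have h := (Real.hasDerivAt_rpow_const (x := g p) (p := β) (Or.inl hne)).comp_hasFDerivAt p
    hg.hasFDerivAt
  have h2 : HasFDerivAt (fun q => g q ^ β) ((β * g p ^ (β - 1)) • fderiv ℝ g p) p := h
  unfold Dd
  rw [h2.fderiv]
  simp

-- fragment appended to t4
theorem Dd_contDiff {f : Pt n m → ℝ} (hf : ContDiff ℝ (⊤ : ℕ∞) f) (v : Pt n m) : ContDiff ℝ (⊤ : ℕ∞) (Dd v f) := by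
  have h1 : ContDiff ℝ (⊤ : ℕ∞) (fderiv ℝ f) := hf.fderiv_right (by simp)
  exact (ContinuousLinearMap.apply ℝ ℝ v).contDiff.comp h1

theorem Dd_comm {f : Pt n m → ℝ} (hf : ContDiff ℝ (⊤ : ℕ∞) f) (v u : Pt n m) : Dd v (Dd u f) = Dd u (Dd v f) := by
  funext q
  have hs : IsSymmSndFDerivAt ℝ f q := (hf.contDiffAt).isSymmSndFDerivAt (by rw [minSmoothness_of_isRCLikeNormedField]; exact WithTop.coe_le_coe.mpr le_top)
  have h1 : ContDiff ℝ (⊤ : ℕ∞) (fderiv ℝ f) := hf.fderiv_right (by simp)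
  have key : ∀ a b : Pt n m, Dd a (Dd b f) q = fderiv ℝ (fderiv ℝ f) q a b := by
    intro a b
    have hc : HasFDerivAt (fun q => (ContinuousLinearMap.apply ℝ ℝ b) (fderiv ℝ f q))
        ((ContinuousLinearMap.apply ℝ ℝ b).comp (fderiv ℝ (fderiv ℝ f) q)) q :=
      (ContinuousLinearMap.apply ℝ ℝ b).hasFDerivAt.comp q
        (h1.differentiable (by simp) q).hasFDerivAt
    have : Dd b f = fun q => (ContinuousLinearMap.apply ℝ ℝ b) (fderiv ℝ f q) := rfl
    rw [Dd, this, hc.fderiv]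
    rfl
  rw [key, key, hs]

theorem Dd_congr {f g : Pt n m → ℝ} {p : Pt n m} (h : f =ᶠ[nhds p] g) (v : Pt n m) :
    Dd v f p = Dd v g p := by
  unfold Dd; rw [Filter.EventuallyEq.fderiv_eq h]

theorem Dd_add {f g : Pt n m → ℝ} {p : Pt n m} (hf : DifferentiableAt ℝ f p)
    (hg : DifferentiableAt ℝ g p) (v : Pt n m) :
    Dd v (fun q => f q + g q) p = Dd v f p + Dd v g p := by
  unfold Dd; rw [fderiv_fun_add hf hg]; rfl

theorem Dd_const_mul {g : Pt n m → ℝ} {p : Pt n m} (c : ℝ)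
    (hg : DifferentiableAt ℝ g p) (v : Pt n m) :
    Dd v (fun q => c * g q) p = c * Dd v g p := by
  unfold Dd; rw [fderiv_const_mul hg]; simp


theorem Dd_sum' {ι : Type*} {s : Finset ι} {F : ι → Pt n m → ℝ} {p : Pt n m}
    (h : ∀ i ∈ s, DifferentiableAt ℝ (F i) p) (v : Pt n m) :
    Dd v (fun q => ∑ i ∈ s, F i q) p = ∑ i ∈ s, Dd v (F i) p := by
  unfold Dd; rw [fderiv_fun_sum h]; simp

theorem Dd_mul' {f g : Pt n m → ℝ} {p : Pt n m} (hf : DifferentiableAt ℝ f p)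
    (hg : DifferentiableAt ℝ g p) (v : Pt n m) :
    Dd v (fun q => f q * g q) p = Dd v f p * g p + f p * Dd v g p := by
  unfold Dd; rw [fderiv_fun_mul hf hg]; simp; ring

theorem Dd_clm' (L : Pt n m →L[ℝ] ℝ) (p v : Pt n m) : Dd v (fun q => L q) p = L v := by
  unfold Dd; rw [L.fderiv]

theorem Dd_uu (v p : Pt n m) : Dd v uu p = ∑ i, 2 * v.1 i * p.1 i := by
  have : (uu : Pt n m → ℝ) = fun q => ∑ i, Xl i q * Xl i q := rfl
  rw [this, Dd_sum' (fun i _ => ((Xl i).differentiableAt).fun_mul ((Xl i).differentiableAt))]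
  refine Finset.sum_congr rfl fun i _ => ?_
  rw [Dd_mul' (Xl i).differentiableAt (Xl i).differentiableAt, Dd_clm', Xl_apply, Xl_apply]
  ring

def duu (v : Pt n m) : Pt n m → ℝ := fun q => ∑ i, 2 * v.1 i * q.1 i

theorem duu_cd (v : Pt n m) : ContDiff ℝ (⊤ : ℕ∞) (duu v) := by
  have : duu v = fun q => ∑ i, 2 * v.1 i * Xl i q := rfl
  rw [this]
  exact ContDiff.sum fun i _ => ContDiff.mul contDiff_const (Xl i).contDiff

theorem Dd_duu (w v p : Pt n m) : Dd w (duu v) p = ∑ i, 2 * v.1 i * w.1 i := by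
  have : duu v = fun q => ∑ i, (2 * v.1 i) * Xl i q := rfl
  rw [this, Dd_sum' (fun i _ => (differentiableAt_const _).fun_mul (Xl i).differentiableAt)]
  refine Finset.sum_congr rfl fun i _ => ?_
  rw [Dd_mul' (differentiableAt_const _) (Xl i).differentiableAt, Dd_clm']
  have h0 : Dd w (fun _ => 2 * v.1 i) p = 0 := by simp [Dd]
  rw [h0]
  simp only [Xl_apply]
  ring

theorem duu_exv (k : Fin n) (q : Pt n m) : duu (exv k) q = 2 * q.1 k := by
  unfold duu exv
  rw [Finset.sum_eq_single k]
  · simp [EuclideanSpace.single_apply]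
  · intro i _ hik; simp [EuclideanSpace.single_apply, hik]
  · simp

theorem duu_eyv (j : Fin m) (q : Pt n m) : duu (eyv j : Pt n m) q = 0 := by
  unfold duu eyv; simp

theorem cdAt_pow (γ : ℝ) {q : Pt n m} (hq : q.1 ≠ 0) :
    ContDiffAt ℝ (⊤ : ℕ∞) (fun q : Pt n m => uu q ^ γ) q :=
  (uu_cd.contDiffAt).rpow_const_of_ne (ne_of_gt (uu_pos hq))

theorem Dd_pow (γ : ℝ) {q : Pt n m} (hq : q.1 ≠ 0) (v : Pt n m) :
    Dd v (fun q : Pt n m => uu q ^ γ) q = γ * uu q ^ (γ - 1) * duu v q := by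
  rw [Dd_rpow (uu_cd.differentiable (by simp) q) (ne_of_gt (uu_pos hq)) γ v, Dd_uu]
  rfl

def Gfun (β : ℝ) (f : Pt n m → ℝ) : Pt n m → ℝ := fun q =>
  (∑ i, Dd (exv i) f q * Dd (exv i) f q) + uu q ^ β * (∑ j, Dd (eyv j) f q * Dd (eyv j) f q)

def Lfun (β : ℝ) (f : Pt n m → ℝ) : Pt n m → ℝ := fun q =>
  (∑ k, Dd (exv k) (Dd (exv k) f) q) + uu q ^ β * (∑ l, Dd (eyv l) (Dd (eyv l) f) q)
theorem L1 {β : ℝ} {f : Pt n m → ℝ} (hf : ContDiff ℝ (⊤ : ℕ∞) f) (v : Pt n m) {q : Pt n m}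
    (hq : q.1 ≠ 0) :
    Dd v (Gfun β f) q =
      (∑ i, (Dd v (Dd (exv i) f) q * Dd (exv i) f q + Dd (exv i) f q * Dd v (Dd (exv i) f) q))
      + ((β * uu q ^ (β - 1) * duu v q) * (∑ j, Dd (eyv j) f q * Dd (eyv j) f q)
         + uu q ^ β * (∑ j, (Dd v (Dd (eyv j) f) q * Dd (eyv j) f q
             + Dd (eyv j) f q * Dd v (Dd (eyv j) f) q))) := by
  have dfx : ∀ w : Pt n m, DifferentiableAt ℝ (Dd w f) q :=
    fun w => (Dd_contDiff hf w).differentiable (by simp) q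
  have hA : DifferentiableAt ℝ (fun q' : Pt n m => ∑ i, Dd (exv i) f q' * Dd (exv i) f q') q :=
    DifferentiableAt.fun_sum fun i _ => (dfx _).fun_mul (dfx _)
  have hB : DifferentiableAt ℝ (fun q' : Pt n m => ∑ j, Dd (eyv j) f q' * Dd (eyv j) f q') q :=
    DifferentiableAt.fun_sum fun j _ => (dfx _).fun_mul (dfx _)
  have hw : DifferentiableAt ℝ (fun q' : Pt n m => uu q' ^ β) q :=
    (cdAt_pow β hq).differentiableAt (by simp)
  unfold Gfun
  rw [Dd_add hA (hw.fun_mul hB), Dd_mul' hw hB, Dd_pow β hq v,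
    Dd_sum' (fun i _ => (dfx _).fun_mul (dfx _)) v,
    Dd_sum' (fun j _ => (dfx _).fun_mul (dfx _)) v,
    Finset.sum_congr rfl (fun i (_ : i ∈ Finset.univ) => Dd_mul' (dfx (exv i)) (dfx (exv i)) v),
    Finset.sum_congr rfl (fun j (_ : j ∈ Finset.univ) => Dd_mul' (dfx (eyv j)) (dfx (eyv j)) v)]
theorem L2 {β : ℝ} {f : Pt n m → ℝ} (hf : ContDiff ℝ (⊤ : ℕ∞) f) (v : Pt n m) {q : Pt n m}
    (hq : q.1 ≠ 0) :
    Dd v (Lfun β f) q =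
      (∑ k, Dd v (Dd (exv k) (Dd (exv k) f)) q)
      + ((β * uu q ^ (β - 1) * duu v q) * (∑ l, Dd (eyv l) (Dd (eyv l) f) q)
         + uu q ^ β * (∑ l, Dd v (Dd (eyv l) (Dd (eyv l) f)) q)) := by
  have dfx : ∀ w w' : Pt n m, DifferentiableAt ℝ (Dd w (Dd w' f)) q :=
    fun w w' => (Dd_contDiff (Dd_contDiff hf w') w).differentiable (by simp) q
  have hC : DifferentiableAt ℝ (fun q' : Pt n m => ∑ k, Dd (exv k) (Dd (exv k) f) q') q :=
    DifferentiableAt.fun_sum fun k _ => dfx _ _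
  have hD : DifferentiableAt ℝ (fun q' : Pt n m => ∑ l, Dd (eyv l) (Dd (eyv l) f) q') q :=
    DifferentiableAt.fun_sum fun l _ => dfx _ _
  have hw : DifferentiableAt ℝ (fun q' : Pt n m => uu q' ^ β) q :=
    (cdAt_pow β hq).differentiableAt (by simp)
  unfold Lfun
  rw [Dd_add hC (hw.fun_mul hD), Dd_mul' hw hD, Dd_pow β hq v,
    Dd_sum' (fun k _ => dfx _ _) v, Dd_sum' (fun l _ => dfx _ _) v]
theorem E2 {β : ℝ} {f : Pt n m → ℝ} (hf : ContDiff ℝ (⊤ : ℕ∞) f) (v : Pt n m) {p : Pt n m}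
    (hp : p.1 ≠ 0) :
    Dd v (Dd v (Gfun β f)) p =
      2 * (∑ i, Dd v (Dd (exv i) f) p ^ 2)
      + 2 * (∑ i, Dd (exv i) f p * Dd v (Dd v (Dd (exv i) f)) p)
      + (β * ((β - 1) * uu p ^ (β - 1 - 1) * duu v p) * duu v p
         + 2 * β * uu p ^ (β - 1) * (∑ i, v.1 i ^ 2))
        * (∑ j, Dd (eyv j) f p ^ 2)
      + 4 * (β * uu p ^ (β - 1) * duu v p) * (∑ j, Dd (eyv j) f p * Dd v (Dd (eyv j) f) p)
      + 2 * uu p ^ β * (∑ j, Dd v (Dd (eyv j) f) p ^ 2)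
      + 2 * uu p ^ β * (∑ j, Dd (eyv j) f p * Dd v (Dd v (Dd (eyv j) f)) p) := by
  have hev : ∀ᶠ q in nhds p, q.1 ≠ 0 :=
    (((isOpen_compl_singleton (x := (0 : EuclideanSpace ℝ (Fin n)))).preimage continuous_fst).mem_nhds hp : {q : Pt n m | q.1 ≠ 0} ∈ nhds p)
  have hcong : Dd v (Gfun β f) =ᶠ[nhds p]
      (fun q => (∑ i, (Dd v (Dd (exv i) f) q * Dd (exv i) f q
          + Dd (exv i) f q * Dd v (Dd (exv i) f) q))
        + ((β * uu q ^ (β - 1) * duu v q) * (∑ j, Dd (eyv j) f q * Dd (eyv j) f q)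
           + uu q ^ β * (∑ j, (Dd v (Dd (eyv j) f) q * Dd (eyv j) f q
               + Dd (eyv j) f q * Dd v (Dd (eyv j) f) q)))) :=
    hev.mono fun q hq => L1 hf v hq
  rw [Dd_congr hcong v]
  -- differentiability facts
  have dfx : ∀ w : Pt n m, DifferentiableAt ℝ (Dd w f) p :=
    fun w => (Dd_contDiff hf w).differentiable (by simp) p
  have dfx2 : ∀ w w' : Pt n m, DifferentiableAt ℝ (Dd w (Dd w' f)) p :=
    fun w w' => (Dd_contDiff (Dd_contDiff hf w') w).differentiable (by simp) p
  have hS1 : DifferentiableAt ℝ (fun q : Pt n m => ∑ i, (Dd v (Dd (exv i) f) q * Dd (exv i) f q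
      + Dd (exv i) f q * Dd v (Dd (exv i) f) q)) p :=
    DifferentiableAt.fun_sum fun i _ => ((dfx2 _ _).fun_mul (dfx _)).fun_add ((dfx _).fun_mul (dfx2 _ _))
  have hS3 : DifferentiableAt ℝ (fun q : Pt n m => ∑ j, (Dd v (Dd (eyv j) f) q * Dd (eyv j) f q
      + Dd (eyv j) f q * Dd v (Dd (eyv j) f) q)) p :=
    DifferentiableAt.fun_sum fun j _ => ((dfx2 _ _).fun_mul (dfx _)).fun_add ((dfx _).fun_mul (dfx2 _ _))
  have hB : DifferentiableAt ℝ (fun q : Pt n m => ∑ j, Dd (eyv j) f q * Dd (eyv j) f q) p :=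
    DifferentiableAt.fun_sum fun j _ => (dfx _).fun_mul (dfx _)
  have hw : DifferentiableAt ℝ (fun q : Pt n m => uu q ^ β) p :=
    (cdAt_pow β hp).differentiableAt (by simp)
  have hw1 : DifferentiableAt ℝ (fun q : Pt n m => uu q ^ (β - 1)) p :=
    (cdAt_pow (β - 1) hp).differentiableAt (by simp)
  have hduu : DifferentiableAt ℝ (duu v) p := (duu_cd v).differentiable (by simp) p
  have hw1' : DifferentiableAt ℝ (fun q : Pt n m => β * uu q ^ (β - 1)) p := hw1.const_mul β
  have hW1 : DifferentiableAt ℝ (fun q : Pt n m => β * uu q ^ (β - 1) * duu v q) p :=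
    hw1'.fun_mul hduu
  -- expand
  have ex1 : (∑ i : Fin n, Dd v (fun q : Pt n m => Dd v (Dd (exv i) f) q * Dd (exv i) f q
        + Dd (exv i) f q * Dd v (Dd (exv i) f) q) p)
      = 2 * (∑ i, Dd v (Dd (exv i) f) p ^ 2)
        + 2 * (∑ i, Dd (exv i) f p * Dd v (Dd v (Dd (exv i) f)) p) := by
    rw [Finset.sum_congr rfl (fun (i : Fin n) (_ : i ∈ Finset.univ) =>
      show Dd v (fun q : Pt n m => Dd v (Dd (exv i) f) q * Dd (exv i) f q
          + Dd (exv i) f q * Dd v (Dd (exv i) f) q) p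
        = 2 * (Dd v (Dd (exv i) f) p ^ 2)
          + 2 * (Dd (exv i) f p * Dd v (Dd v (Dd (exv i) f)) p) from by
        rw [Dd_add ((dfx2 v (exv i)).fun_mul (dfx (exv i))) ((dfx (exv i)).fun_mul (dfx2 v (exv i))),
          Dd_mul' (dfx2 v (exv i)) (dfx (exv i)), Dd_mul' (dfx (exv i)) (dfx2 v (exv i))]
        ring), Finset.sum_add_distrib, ← Finset.mul_sum, ← Finset.mul_sum]
  have ex3 : (∑ j : Fin m, Dd v (fun q : Pt n m => Dd v (Dd (eyv j) f) q * Dd (eyv j) f q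
        + Dd (eyv j) f q * Dd v (Dd (eyv j) f) q) p)
      = 2 * (∑ j, Dd v (Dd (eyv j) f) p ^ 2)
        + 2 * (∑ j, Dd (eyv j) f p * Dd v (Dd v (Dd (eyv j) f)) p) := by
    rw [Finset.sum_congr rfl (fun (j : Fin m) (_ : j ∈ Finset.univ) =>
      show Dd v (fun q : Pt n m => Dd v (Dd (eyv j) f) q * Dd (eyv j) f q
          + Dd (eyv j) f q * Dd v (Dd (eyv j) f) q) p
        = 2 * (Dd v (Dd (eyv j) f) p ^ 2)
          + 2 * (Dd (eyv j) f p * Dd v (Dd v (Dd (eyv j) f)) p) from by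
        rw [Dd_add ((dfx2 v (eyv j)).fun_mul (dfx (eyv j))) ((dfx (eyv j)).fun_mul (dfx2 v (eyv j))),
          Dd_mul' (dfx2 v (eyv j)) (dfx (eyv j)), Dd_mul' (dfx (eyv j)) (dfx2 v (eyv j))]
        ring), Finset.sum_add_distrib, ← Finset.mul_sum, ← Finset.mul_sum]
  have exB : (∑ j : Fin m, Dd v (fun q : Pt n m => Dd (eyv j) f q * Dd (eyv j) f q) p)
      = 2 * (∑ j, Dd (eyv j) f p * Dd v (Dd (eyv j) f) p) := by
    rw [Finset.sum_congr rfl (fun (j : Fin m) (_ : j ∈ Finset.univ) =>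
      show Dd v (fun q : Pt n m => Dd (eyv j) f q * Dd (eyv j) f q) p
        = 2 * (Dd (eyv j) f p * Dd v (Dd (eyv j) f) p) from by
        rw [Dd_mul' (dfx (eyv j)) (dfx (eyv j))]
        ring), ← Finset.mul_sum]
  have eB : (∑ j : Fin m, Dd (eyv j) f p * Dd (eyv j) f p) = ∑ j, Dd (eyv j) f p ^ 2 :=
    Finset.sum_congr rfl fun j _ => by ring
  have eS3 : (∑ j : Fin m, (Dd v (Dd (eyv j) f) p * Dd (eyv j) f p
        + Dd (eyv j) f p * Dd v (Dd (eyv j) f) p))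
      = 2 * ∑ j, Dd (eyv j) f p * Dd v (Dd (eyv j) f) p := by
    rw [Finset.mul_sum]
    exact Finset.sum_congr rfl fun j _ => by ring
  have eV : (∑ i : Fin n, 2 * v.1 i * v.1 i) = 2 * ∑ i, v.1 i ^ 2 := by
    rw [Finset.mul_sum]
    exact Finset.sum_congr rfl fun i _ => by ring
  rw [Dd_add hS1 ((hW1.fun_mul hB).fun_add (hw.fun_mul hS3)),
    Dd_add (hW1.fun_mul hB) (hw.fun_mul hS3),
    Dd_mul' hW1 hB, Dd_mul' hw hS3,
    Dd_mul' hw1' hduu, Dd_const_mul β hw1,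
    Dd_pow (β - 1) hp v, Dd_pow β hp v, Dd_duu,
    Dd_sum' (fun (i : Fin n) (_ : i ∈ Finset.univ) => ((dfx2 v (exv i)).fun_mul (dfx (exv i))).fun_add
      ((dfx (exv i)).fun_mul (dfx2 v (exv i)))) v,
    Dd_sum' (fun (j : Fin m) (_ : j ∈ Finset.univ) => ((dfx2 v (eyv j)).fun_mul (dfx (eyv j))).fun_add
      ((dfx (eyv j)).fun_mul (dfx2 v (eyv j)))) v,
    Dd_sum' (fun (j : Fin m) (_ : j ∈ Finset.univ) => (dfx (eyv j)).fun_mul (dfx (eyv j))) v,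
    ex1, ex3, exB, eB, eS3, eV]
  ring


theorem sum_sq_exv (k : Fin n) : (∑ i, ((exv k : Pt n m).1 i) ^ 2) = 1 := by
  unfold exv
  rw [Finset.sum_eq_single k]
  · simp [EuclideanSpace.single_apply]
  · intro i _ hik; simp [EuclideanSpace.single_apply, hik]
  · simp

theorem sum_sq_eyv (l : Fin m) : (∑ i : Fin n, ((eyv l : Pt n m).1 i) ^ 2) = 0 := by
  unfold eyv; simp

theorem comm3 {f : Pt n m → ℝ} (hf : ContDiff ℝ (⊤ : ℕ∞) f) (a b : Pt n m) :
    Dd a (Dd a (Dd b f)) = Dd b (Dd a (Dd a f)) := by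
  rw [Dd_comm hf a b]
  exact Dd_comm (Dd_contDiff hf a) a b

theorem gamma2_formula {β : ℝ} {f : Pt n m → ℝ} (hf : ContDiff ℝ (⊤ : ℕ∞) f) {p : Pt n m}
    (hp : p.1 ≠ 0) :
    gamma2 β f p =
      (∑ i, ∑ k, Dd (exv i) (Dd (exv k) f) p ^ 2)
      + 2 * uu p ^ β * (∑ i, ∑ j, Dd (exv i) (Dd (eyv j) f) p ^ 2)
      + uu p ^ β * uu p ^ β * (∑ j, ∑ l, Dd (eyv j) (Dd (eyv l) f) p ^ 2)
      + (2 * β * (β - 1) + (n : ℝ) * β) * uu p ^ (β - 1) * (∑ j, Dd (eyv j) f p ^ 2)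
      + 4 * β * uu p ^ (β - 1)
        * (∑ k, p.1 k * (∑ j, Dd (eyv j) f p * Dd (exv k) (Dd (eyv j) f) p))
      - 2 * β * uu p ^ (β - 1) * (∑ i, p.1 i * Dd (exv i) f p)
        * (∑ l, Dd (eyv l) (Dd (eyv l) f) p) := by
  have hup : uu p ≠ 0 := ne_of_gt (uu_pos hp)
  have eExp : uu p ^ (β - 1 - 1) * uu p = uu p ^ (β - 1) := by
    rw [Real.rpow_sub_one hup (β - 1)]
    field_simp
  have hG : gammaG β f f = Gfun β f := by
    funext q; unfold gammaG Gfun; rw [norm_rpow_eq β q]; rfl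
  have hLf : calL β f = Lfun β f := by
    funext q; unfold calL Lfun; rw [norm_rpow_eq β q]; rfl
  have e0 : gamma2 β f p = (1/2) * ((∑ k, Dd (exv k) (Dd (exv k) (Gfun β f)) p)
        + uu p ^ β * ∑ l, Dd (eyv l) (Dd (eyv l) (Gfun β f)) p)
      - ((∑ i, Dd (exv i) f p * Dd (exv i) (Lfun β f) p)
        + uu p ^ β * ∑ j, Dd (eyv j) f p * Dd (eyv j) (Lfun β f) p) := by
    unfold gamma2
    rw [hG, hLf]
    unfold calL gammaG
    rw [norm_rpow_eq β p]
    rfl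
  have hXk : ∀ k : Fin n, Dd (exv k) (Dd (exv k) (Gfun β f)) p =
      2 * (∑ i, Dd (exv k) (Dd (exv i) f) p ^ 2)
      + 2 * (∑ i, Dd (exv i) f p * Dd (exv i) (Dd (exv k) (Dd (exv k) f)) p)
      + 4 * β * (β - 1) * uu p ^ (β - 1 - 1) * (∑ j, Dd (eyv j) f p ^ 2) * (p.1 k * p.1 k)
      + 2 * β * uu p ^ (β - 1) * (∑ j, Dd (eyv j) f p ^ 2)
      + 8 * β * uu p ^ (β - 1)
        * (p.1 k * (∑ j, Dd (eyv j) f p * Dd (exv k) (Dd (eyv j) f) p))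
      + 2 * uu p ^ β * (∑ j, Dd (exv k) (Dd (eyv j) f) p ^ 2)
      + 2 * uu p ^ β * (∑ j, Dd (eyv j) f p * Dd (eyv j) (Dd (exv k) (Dd (exv k) f)) p) := by
    intro k
    rw [E2 hf (exv k) hp, duu_exv k p, sum_sq_exv k]
    simp only [show ∀ b : Pt n m, Dd (exv k) (Dd (exv k) (Dd b f)) = Dd b (Dd (exv k) (Dd (exv k) f))
      from fun b => comm3 hf (exv k) b]
    ring
  have hYl : ∀ l : Fin m, Dd (eyv l) (Dd (eyv l) (Gfun β f)) p =
      2 * (∑ i, Dd (exv i) (Dd (eyv l) f) p ^ 2)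
      + 2 * (∑ i, Dd (exv i) f p * Dd (exv i) (Dd (eyv l) (Dd (eyv l) f)) p)
      + 2 * uu p ^ β * (∑ j, Dd (eyv j) (Dd (eyv l) f) p ^ 2)
      + 2 * uu p ^ β * (∑ j, Dd (eyv j) f p * Dd (eyv j) (Dd (eyv l) (Dd (eyv l) f)) p) := by
    intro l
    rw [E2 hf (eyv l) hp, duu_eyv l p, sum_sq_eyv l]
    simp only [show ∀ b : Pt n m, Dd (eyv l) (Dd (eyv l) (Dd b f)) = Dd b (Dd (eyv l) (Dd (eyv l) f))
      from fun b => comm3 hf (eyv l) b]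
    simp only [show ∀ b : Pt n m, Dd (eyv l) (Dd b f) = Dd b (Dd (eyv l) f)
      from fun b => Dd_comm hf (eyv l) b]
    ring
  have hGi : ∀ i : Fin n, Dd (exv i) f p * Dd (exv i) (Lfun β f) p =
      Dd (exv i) f p * (∑ k, Dd (exv i) (Dd (exv k) (Dd (exv k) f)) p)
      + 2 * β * uu p ^ (β - 1) * (∑ l, Dd (eyv l) (Dd (eyv l) f) p)
        * (p.1 i * Dd (exv i) f p)
      + uu p ^ β * (Dd (exv i) f p * (∑ l, Dd (exv i) (Dd (eyv l) (Dd (eyv l) f)) p)) := by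
    intro i
    rw [L2 hf (exv i) hp, duu_exv i p]
    ring
  have hHj : ∀ j : Fin m, Dd (eyv j) f p * Dd (eyv j) (Lfun β f) p =
      Dd (eyv j) f p * (∑ k, Dd (eyv j) (Dd (exv k) (Dd (exv k) f)) p)
      + uu p ^ β * (Dd (eyv j) f p * (∑ l, Dd (eyv j) (Dd (eyv l) (Dd (eyv l) f)) p)) := by
    intro j
    rw [L2 hf (eyv j) hp, duu_eyv j p]
    ring
  rw [e0, Finset.sum_congr rfl (fun (k : Fin n) _ => hXk k),
    Finset.sum_congr rfl (fun (l : Fin m) _ => hYl l),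
    Finset.sum_congr rfl (fun (i : Fin n) _ => hGi i),
    Finset.sum_congr rfl (fun (j : Fin m) _ => hHj j)]
  simp only [Finset.sum_add_distrib, ← Finset.mul_sum]
  -- canonicalize the remaining double sums
  have cUU : (∑ k, p.1 k * p.1 k : ℝ) = uu p := rfl
  have cAT : (∑ k : Fin n, ∑ i : Fin n,
        Dd (exv i) f p * Dd (exv i) (Dd (exv k) (Dd (exv k) f)) p)
      = ∑ i : Fin n, Dd (exv i) f p * (∑ k, Dd (exv i) (Dd (exv k) (Dd (exv k) f)) p) := by
    rw [Finset.sum_comm]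
    exact Finset.sum_congr rfl fun i _ => (Finset.mul_sum _ _ _).symm
  have cBT : (∑ k : Fin n, ∑ j : Fin m,
        Dd (eyv j) f p * Dd (eyv j) (Dd (exv k) (Dd (exv k) f)) p)
      = ∑ j : Fin m, Dd (eyv j) f p * (∑ k, Dd (eyv j) (Dd (exv k) (Dd (exv k) f)) p) := by
    rw [Finset.sum_comm]
    exact Finset.sum_congr rfl fun j _ => (Finset.mul_sum _ _ _).symm
  have cA2 : (∑ l : Fin m, ∑ i : Fin n, Dd (exv i) (Dd (eyv l) f) p ^ 2)
      = ∑ i : Fin n, ∑ l : Fin m, Dd (exv i) (Dd (eyv l) f) p ^ 2 := Finset.sum_comm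
  have cA3 : (∑ l : Fin m, ∑ j : Fin m, Dd (eyv j) (Dd (eyv l) f) p ^ 2)
      = ∑ j : Fin m, ∑ l : Fin m, Dd (eyv j) (Dd (eyv l) f) p ^ 2 := Finset.sum_comm
  have cAR : (∑ l : Fin m, ∑ i : Fin n,
        Dd (exv i) f p * Dd (exv i) (Dd (eyv l) (Dd (eyv l) f)) p)
      = ∑ i : Fin n, Dd (exv i) f p * (∑ l, Dd (exv i) (Dd (eyv l) (Dd (eyv l) f)) p) := by
    rw [Finset.sum_comm]
    exact Finset.sum_congr rfl fun i _ => (Finset.mul_sum _ _ _).symm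
  have cBS : (∑ l : Fin m, ∑ j : Fin m,
        Dd (eyv j) f p * Dd (eyv j) (Dd (eyv l) (Dd (eyv l) f)) p)
      = ∑ j : Fin m, Dd (eyv j) f p * (∑ l, Dd (eyv j) (Dd (eyv l) (Dd (eyv l) f)) p) := by
    rw [Finset.sum_comm]
    exact Finset.sum_congr rfl fun j _ => (Finset.mul_sum _ _ _).symm
  have cConst : (∑ _k : Fin n, ∑ j : Fin m, Dd (eyv j) f p ^ 2 : ℝ)
      = (n : ℝ) * (∑ j, Dd (eyv j) f p ^ 2) := by
    rw [Finset.sum_const, Finset.card_univ, Fintype.card_fin, nsmul_eq_mul]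
  rw [cUU, cAT, cBT, cA2, cA3, cAR, cBS, cConst, ← eExp]
  ring

theorem young {a b c : ℝ} (h : c^2 ≤ a*b) (ha : 0 ≤ a) (hb : 0 ≤ b) : -(a+b) ≤ 2*c := by
  nlinarith [sq_nonneg (a-b), sq_nonneg (a+b+2*c), sq_nonneg (a+b-2*c)]

set_option maxHeartbeats 2000000 in
theorem key_est {β : ℝ} (hβ : 0 ≤ β) {f : Pt n m → ℝ} (hf : ContDiff ℝ (⊤ : ℕ∞) f) {p : Pt n m}
    (hp : p.1 ≠ 0) :
    gamma2 β f p ≥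
      ((∑ i, ∑ k, Dd (exv i) (Dd (exv k) f) p ^ 2)
        + 2 * uu p ^ β * (∑ i, ∑ j, Dd (exv i) (Dd (eyv j) f) p ^ 2)
        + uu p ^ β * uu p ^ β * (∑ j, ∑ l, Dd (eyv j) (Dd (eyv l) f) p ^ 2)) / 2
      - (2*β^2 + 2*β + (n:ℝ)*β + 4*β^2 + 2*β^2*(m:ℝ) + 1) * (uu p)⁻¹ * gammaG β f f p := by
  have hU : 0 < uu p := uu_pos hp
  have hGam : gammaG β f f p = (∑ i, Dd (exv i) f p ^ 2) + uu p ^ β * (∑ j, Dd (eyv j) f p ^ 2) := by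
    unfold gammaG
    rw [norm_rpow_eq β p]
    congr 1
    · exact Finset.sum_congr rfl fun i _ => by rw [pow_two]; rfl
    · congr 1
      exact Finset.sum_congr rfl fun j _ => by rw [pow_two]; rfl
  rw [gamma2_formula hf hp, hGam]
  set W : ℝ := uu p ^ β with hWdef
  set ρ : ℝ := uu p ^ (β - 1) with hρdef
  set A1 : ℝ := ∑ i, ∑ k, Dd (exv i) (Dd (exv k) f) p ^ 2 with hA1
  set A2 : ℝ := ∑ i, ∑ j, Dd (exv i) (Dd (eyv j) f) p ^ 2 with hA2
  set A3 : ℝ := ∑ j, ∑ l, Dd (eyv j) (Dd (eyv l) f) p ^ 2 with hA3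
  set Ap : ℝ := ∑ i, Dd (exv i) f p ^ 2 with hAp
  set Bp : ℝ := ∑ j, Dd (eyv j) f p ^ 2 with hBp
  set XA : ℝ := ∑ i, p.1 i * Dd (exv i) f p with hXA
  set XBC : ℝ := ∑ k, p.1 k * (∑ j, Dd (eyv j) f p * Dd (exv k) (Dd (eyv j) f) p) with hXBC
  set Dyp : ℝ := ∑ l, Dd (eyv l) (Dd (eyv l) f) p with hDyp
  clear_value W ρ A1 A2 A3 Ap Bp XA XBC Dyp
  have hWpos : 0 < W := by rw [hWdef]; exact Real.rpow_pos_of_pos hU β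
  have hρpos : 0 < ρ := by rw [hρdef]; exact Real.rpow_pos_of_pos hU (β - 1)
  have hρU : ρ * uu p = W := by
    rw [hρdef, hWdef, Real.rpow_sub_one (ne_of_gt hU)]
    field_simp
  have hA1n : 0 ≤ A1 := by
    rw [hA1]; exact Finset.sum_nonneg fun i _ => Finset.sum_nonneg fun k _ => sq_nonneg _
  have hA2n : 0 ≤ A2 := by
    rw [hA2]; exact Finset.sum_nonneg fun i _ => Finset.sum_nonneg fun k _ => sq_nonneg _
  have hA3n : 0 ≤ A3 := by
    rw [hA3]; exact Finset.sum_nonneg fun i _ => Finset.sum_nonneg fun k _ => sq_nonneg _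
  have hApn : 0 ≤ Ap := by rw [hAp]; exact Finset.sum_nonneg fun i _ => sq_nonneg _
  have hBpn : 0 ≤ Bp := by rw [hBp]; exact Finset.sum_nonneg fun i _ => sq_nonneg _
  have hn0 : (0:ℝ) ≤ (n:ℝ) := Nat.cast_nonneg n
  have hm0 : (0:ℝ) ≤ (m:ℝ) := Nat.cast_nonneg m
  -- Cauchy-Schwarz facts
  have csXA : XA^2 ≤ uu p * Ap := by
    have h := Finset.sum_mul_sq_le_sq_mul_sq Finset.univ (fun i => p.1 i)
      (fun i => Dd (exv i) f p)
    have e : (∑ i, p.1 i ^ 2 : ℝ) = uu p :=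
      Finset.sum_congr rfl fun i _ => by rw [pow_two]
    calc XA^2 = (∑ i, p.1 i * Dd (exv i) f p)^2 := by rw [hXA]
    _ ≤ (∑ i, p.1 i ^ 2) * (∑ i, Dd (exv i) f p ^ 2) := h
    _ = uu p * Ap := by rw [e, hAp]
  have csDyp : Dyp^2 ≤ (m:ℝ) * A3 := by
    have h := Finset.sum_mul_sq_le_sq_mul_sq Finset.univ (fun _ : Fin m => (1:ℝ))
      (fun l => Dd (eyv l) (Dd (eyv l) f) p)
    have e1 : (∑ _l : Fin m, (1:ℝ)^2) = (m:ℝ) := by simp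
    have e2 : (∑ l : Fin m, Dd (eyv l) (Dd (eyv l) f) p ^ 2) ≤ A3 := by
      rw [hA3]
      refine Finset.sum_le_sum fun j _ => ?_
      exact Finset.single_le_sum (f := fun l => Dd (eyv j) (Dd (eyv l) f) p ^ 2)
        (fun l _ => sq_nonneg _) (Finset.mem_univ j)
    calc Dyp^2 = (∑ l, (1:ℝ) * Dd (eyv l) (Dd (eyv l) f) p)^2 := by rw [hDyp]; simp
    _ ≤ (∑ _l : Fin m, (1:ℝ)^2) * (∑ l, Dd (eyv l) (Dd (eyv l) f) p ^ 2) := h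
    _ ≤ (m:ℝ) * A3 := by rw [e1]; exact mul_le_mul_of_nonneg_left e2 hm0
  have csXBC : XBC^2 ≤ uu p * Bp * A2 := by
    have h := Finset.sum_mul_sq_le_sq_mul_sq Finset.univ
      (fun z : Fin n × Fin m => p.1 z.1 * Dd (eyv z.2) f p)
      (fun z : Fin n × Fin m => Dd (exv z.1) (Dd (eyv z.2) f) p)
    have e0 : XBC = ∑ z : Fin n × Fin m,
        (p.1 z.1 * Dd (eyv z.2) f p) * Dd (exv z.1) (Dd (eyv z.2) f) p := by
      rw [Fintype.sum_prod_type, hXBC]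
      exact Finset.sum_congr rfl fun k _ => by
        rw [Finset.mul_sum]
        exact Finset.sum_congr rfl fun j _ => by ring
    have e1 : (∑ z : Fin n × Fin m, (p.1 z.1 * Dd (eyv z.2) f p)^2) = uu p * Bp := by
      rw [Fintype.sum_prod_type]
      have h2 : ∀ k : Fin n, (∑ j, (p.1 k * Dd (eyv j) f p)^2) = (p.1 k * p.1 k) * Bp := by
        intro k
        rw [hBp, Finset.mul_sum]
        exact Finset.sum_congr rfl fun j _ => by ring
      rw [Finset.sum_congr rfl fun k _ => h2 k, ← Finset.sum_mul]
      rfl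
    have e2 : (∑ z : Fin n × Fin m, Dd (exv z.1) (Dd (eyv z.2) f) p ^ 2) = A2 := by
      rw [Fintype.sum_prod_type, hA2]
    calc XBC^2 = (∑ z : Fin n × Fin m,
          (p.1 z.1 * Dd (eyv z.2) f p) * Dd (exv z.1) (Dd (eyv z.2) f) p)^2 := by rw [e0]
    _ ≤ (∑ z : Fin n × Fin m, (p.1 z.1 * Dd (eyv z.2) f p)^2)
        * (∑ z : Fin n × Fin m, Dd (exv z.1) (Dd (eyv z.2) f) p ^ 2) := h
    _ = uu p * Bp * A2 := by rw [e1, e2]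
  -- remainder-term estimates
  have hT2 : -(W * A2 + 4*β^2 * (uu p)⁻¹ * W * Bp) ≤ 2 * (2*β*ρ*XBC) := by
    apply young _ (mul_nonneg hWpos.le hA2n)
      (mul_nonneg (mul_nonneg (mul_nonneg (by positivity : (0:ℝ) ≤ 4*β^2)
        (inv_nonneg.mpr hU.le)) hWpos.le) hBpn)
    have h3 : W * A2 * (4*β^2 * (uu p)⁻¹ * W * Bp) = 4*β^2*ρ^2 * (uu p * Bp * A2) := by
      rw [← hρU]; field_simp
    calc (2*β*ρ*XBC)^2 = 4*β^2*ρ^2 * XBC^2 := by ring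
    _ ≤ 4*β^2*ρ^2 * (uu p * Bp * A2) := by
        apply mul_le_mul_of_nonneg_left csXBC (by positivity : (0:ℝ) ≤ 4*β^2*ρ^2)
    _ = W * A2 * (4*β^2 * (uu p)⁻¹ * W * Bp) := h3.symm
  have hT3 : -((1/2) * (W*W) * A3 + 2*β^2*(m:ℝ) * (uu p)⁻¹ * Ap) ≤ 2 * (-(β*ρ*XA*Dyp)) := by
    apply young _ (mul_nonneg (mul_nonneg (by norm_num) (mul_nonneg hWpos.le hWpos.le)) hA3n)
      (mul_nonneg (mul_nonneg (mul_nonneg (by positivity : (0:ℝ) ≤ 2*β^2) hm0)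
        (inv_nonneg.mpr hU.le)) hApn)
    have h3 : (1/2) * (W*W) * A3 * (2*β^2*(m:ℝ) * (uu p)⁻¹ * Ap)
        = β^2*ρ^2 * (uu p * Ap) * ((m:ℝ) * A3) := by
      rw [← hρU]; field_simp
    calc (-(β*ρ*XA*Dyp))^2 = β^2*ρ^2 * XA^2 * Dyp^2 := by ring
    _ ≤ β^2*ρ^2 * (uu p * Ap) * ((m:ℝ) * A3) := by
        apply mul_le_mul (mul_le_mul_of_nonneg_left csXA (by positivity : (0:ℝ) ≤ β^2*ρ^2)) csDyp
          (sq_nonneg _) (mul_nonneg (by positivity : (0:ℝ) ≤ β^2*ρ^2) (mul_nonneg hU.le hApn))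
    _ = (1/2) * (W*W) * A3 * (2*β^2*(m:ℝ) * (uu p)⁻¹ * Ap) := h3.symm
  have hUU : (uu p)⁻¹ * (W * Bp) = ρ * Bp := by
    rw [← hρU]; field_simp
  have hT1 : -( (2*β^2 + 2*β + (n:ℝ)*β) * ((uu p)⁻¹ * (Ap + W * Bp)))
      ≤ (2*β*(β-1) + (n:ℝ)*β) * ρ * Bp := by
    have t1 : 0 ≤ ρ * Bp := mul_nonneg hρpos.le hBpn
    have t2 : 0 ≤ (uu p)⁻¹ * Ap := mul_nonneg (inv_nonneg.mpr hU.le) hApn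
    have expand : (uu p)⁻¹ * (Ap + W * Bp) = (uu p)⁻¹ * Ap + ρ * Bp := by
      rw [mul_add, hUU]
    rw [expand]
    nlinarith [mul_nonneg (mul_nonneg hβ hβ) t1, mul_nonneg hβ t1,
      mul_nonneg (mul_nonneg hn0 hβ) t1, mul_nonneg (mul_nonneg hβ hβ) t2,
      mul_nonneg hβ t2, mul_nonneg (mul_nonneg hn0 hβ) t2]
  -- assemble
  have g1 : 0 ≤ (uu p)⁻¹ * Ap := mul_nonneg (inv_nonneg.mpr hU.le) hApn
  have g2 : 0 ≤ (uu p)⁻¹ * (W * Bp) :=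
    mul_nonneg (inv_nonneg.mpr hU.le) (mul_nonneg hWpos.le hBpn)
  nlinarith [hT1, hT2, hT3, hA1n, g1, g2,
    mul_nonneg (mul_nonneg hβ hβ) g1, mul_nonneg (mul_nonneg hβ hβ) g2,
    mul_nonneg hm0 (mul_nonneg (mul_nonneg hβ hβ) g1),
    mul_nonneg hm0 (mul_nonneg (mul_nonneg hβ hβ) g2)]

theorem cal_sq_bound {β : ℝ} {f : Pt n m → ℝ} {p : Pt n m} (hp : p.1 ≠ 0) :
    (calL β f p)^2 ≤ 2*((n:ℝ)+(m:ℝ)) *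
      ((∑ i, ∑ k, Dd (exv i) (Dd (exv k) f) p ^ 2)
        + 2 * uu p ^ β * (∑ i, ∑ j, Dd (exv i) (Dd (eyv j) f) p ^ 2)
        + uu p ^ β * uu p ^ β * (∑ j, ∑ l, Dd (eyv j) (Dd (eyv l) f) p ^ 2)) := by
  have hU : 0 < uu p := uu_pos hp
  have hcal : calL β f p = (∑ k, Dd (exv k) (Dd (exv k) f) p)
      + uu p ^ β * (∑ l, Dd (eyv l) (Dd (eyv l) f) p) := by
    unfold calL
    rw [norm_rpow_eq β p]
    rfl
  rw [hcal]
  set W : ℝ := uu p ^ β with hWdef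
  set A1 : ℝ := ∑ i, ∑ k, Dd (exv i) (Dd (exv k) f) p ^ 2 with hA1
  set A2 : ℝ := ∑ i, ∑ j, Dd (exv i) (Dd (eyv j) f) p ^ 2 with hA2
  set A3 : ℝ := ∑ j, ∑ l, Dd (eyv j) (Dd (eyv l) f) p ^ 2 with hA3
  set Cd : ℝ := ∑ k, Dd (exv k) (Dd (exv k) f) p with hCd
  set Dy : ℝ := ∑ l, Dd (eyv l) (Dd (eyv l) f) p with hDy
  clear_value W A1 A2 A3 Cd Dy
  have hWpos : 0 < W := by rw [hWdef]; exact Real.rpow_pos_of_pos hU β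
  have hA1n : 0 ≤ A1 := by
    rw [hA1]; exact Finset.sum_nonneg fun i _ => Finset.sum_nonneg fun k _ => sq_nonneg _
  have hA2n : 0 ≤ A2 := by
    rw [hA2]; exact Finset.sum_nonneg fun i _ => Finset.sum_nonneg fun k _ => sq_nonneg _
  have hA3n : 0 ≤ A3 := by
    rw [hA3]; exact Finset.sum_nonneg fun i _ => Finset.sum_nonneg fun k _ => sq_nonneg _
  have hn0 : (0:ℝ) ≤ (n:ℝ) := Nat.cast_nonneg n
  have hm0 : (0:ℝ) ≤ (m:ℝ) := Nat.cast_nonneg m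
  have csC : Cd^2 ≤ (n:ℝ) * A1 := by
    have h := Finset.sum_mul_sq_le_sq_mul_sq Finset.univ (fun _ : Fin n => (1:ℝ))
      (fun k => Dd (exv k) (Dd (exv k) f) p)
    have e1 : (∑ _k : Fin n, (1:ℝ)^2) = (n:ℝ) := by simp
    have e2 : (∑ k : Fin n, Dd (exv k) (Dd (exv k) f) p ^ 2) ≤ A1 := by
      rw [hA1]
      refine Finset.sum_le_sum fun i _ => ?_
      exact Finset.single_le_sum (f := fun k => Dd (exv i) (Dd (exv k) f) p ^ 2)
        (fun k _ => sq_nonneg _) (Finset.mem_univ i)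
    calc Cd^2 = (∑ k, (1:ℝ) * Dd (exv k) (Dd (exv k) f) p)^2 := by rw [hCd]; simp
    _ ≤ (∑ _k : Fin n, (1:ℝ)^2) * (∑ k, Dd (exv k) (Dd (exv k) f) p ^ 2) := h
    _ ≤ (n:ℝ) * A1 := by rw [e1]; exact mul_le_mul_of_nonneg_left e2 hn0
  have csD : Dy^2 ≤ (m:ℝ) * A3 := by
    have h := Finset.sum_mul_sq_le_sq_mul_sq Finset.univ (fun _ : Fin m => (1:ℝ))
      (fun l => Dd (eyv l) (Dd (eyv l) f) p)
    have e1 : (∑ _l : Fin m, (1:ℝ)^2) = (m:ℝ) := by simp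
    have e2 : (∑ l : Fin m, Dd (eyv l) (Dd (eyv l) f) p ^ 2) ≤ A3 := by
      rw [hA3]
      refine Finset.sum_le_sum fun j _ => ?_
      exact Finset.single_le_sum (f := fun l => Dd (eyv j) (Dd (eyv l) f) p ^ 2)
        (fun l _ => sq_nonneg _) (Finset.mem_univ j)
    calc Dy^2 = (∑ l, (1:ℝ) * Dd (eyv l) (Dd (eyv l) f) p)^2 := by rw [hDy]; simp
    _ ≤ (∑ _l : Fin m, (1:ℝ)^2) * (∑ l, Dd (eyv l) (Dd (eyv l) f) p ^ 2) := h
    _ ≤ (m:ℝ) * A3 := by rw [e1]; exact mul_le_mul_of_nonneg_left e2 hm0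
  have h4 : W*W*Dy^2 ≤ W*W*((m:ℝ)*A3) :=
    mul_le_mul_of_nonneg_left csD (mul_nonneg hWpos.le hWpos.le)
  nlinarith [sq_nonneg (Cd - W*Dy), csC, h4, mul_nonneg hm0 hA1n,
    mul_nonneg hn0 (mul_nonneg (mul_nonneg hWpos.le hWpos.le) hA3n),
    mul_nonneg (add_nonneg hn0 hm0) (mul_nonneg hWpos.le hA2n), hA1n, hA2n, hA3n,
    mul_nonneg hWpos.le hA2n, mul_nonneg (mul_nonneg hWpos.le hWpos.le) hA3n]


/-- Curvature–dimension inequality for the Grushin operator: the intermediate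
estimate with arbitrary `ε > 0`, and the resulting inequality
`Γ₂(f) ≥ -c₁|x|⁻² Γ(f) + c₂ (Lf)²` (note `(Lf)² = (𝓛f)²`). -/
theorem stmt_19 (n m : ℕ) (hn : 1 ≤ n) (hm : 1 ≤ m) (β : ℝ) (hβ : 0 ≤ β) :
    (∀ ε > (0:ℝ), ∃ c : ℝ, 0 < c ∧
      ∀ f : EuclideanSpace ℝ (Fin n) × EuclideanSpace ℝ (Fin m) → ℝ,
        ContDiff ℝ (⊤ : ℕ∞) f →
        ∀ p : EuclideanSpace ℝ (Fin n) × EuclideanSpace ℝ (Fin m), p.1 ≠ 0 →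
          gamma2 β f p ≥
            ((∑ i, ∑ k, (pdx i (pdx k f) p) ^ 2) +
              2 * ‖p.1‖ ^ (2 * β) * (∑ i, ∑ j, (pdx i (pdy j f) p) ^ 2) +
              ‖p.1‖ ^ (4 * β) * (∑ j, ∑ l, (pdy j (pdy l f) p) ^ 2)) / 2
            - c * ‖p.1‖⁻¹ ^ (2:ℕ) * gammaG β f f p - ε * (calL β f p) ^ 2) ∧
    (∃ c₁ c₂ : ℝ, 0 < c₁ ∧ 0 < c₂ ∧
      ∀ f : EuclideanSpace ℝ (Fin n) × EuclideanSpace ℝ (Fin m) → ℝ,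
        ContDiff ℝ (⊤ : ℕ∞) f →
        ∀ p : EuclideanSpace ℝ (Fin n) × EuclideanSpace ℝ (Fin m), p.1 ≠ 0 →
          gamma2 β f p ≥
            -c₁ * ‖p.1‖⁻¹ ^ (2:ℕ) * gammaG β f f p + c₂ * (calL β f p) ^ 2) := by
  have hn0 : (0:ℝ) ≤ (n:ℝ) := Nat.cast_nonneg n
  have hm0 : (0:ℝ) ≤ (m:ℝ) := Nat.cast_nonneg m
  set c : ℝ := 2*β^2 + 2*β + (n:ℝ)*β + 4*β^2 + 2*β^2*(m:ℝ) + 1 with hc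
  have hcpos : 0 < c := by
    have h1 : 0 ≤ (n:ℝ)*β := mul_nonneg hn0 hβ
    have h2 : 0 ≤ 2*β^2*(m:ℝ) := mul_nonneg (by positivity) hm0
    nlinarith [sq_nonneg β]
  -- the common conversion of the statement's quantities
  have conv : ∀ (f : Pt n m → ℝ), ContDiff ℝ (⊤ : ℕ∞) f → ∀ p : Pt n m, p.1 ≠ 0 →
      ((∑ i, ∑ k, (pdx i (pdx k f) p) ^ 2) +
        2 * ‖p.1‖ ^ (2 * β) * (∑ i, ∑ j, (pdx i (pdy j f) p) ^ 2) +
        ‖p.1‖ ^ (4 * β) * (∑ j, ∑ l, (pdy j (pdy l f) p) ^ 2))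
      = (∑ i, ∑ k, Dd (exv i) (Dd (exv k) f) p ^ 2)
        + 2 * uu p ^ β * (∑ i, ∑ j, Dd (exv i) (Dd (eyv j) f) p ^ 2)
        + uu p ^ β * uu p ^ β * (∑ j, ∑ l, Dd (eyv j) (Dd (eyv l) f) p ^ 2) := by
    intro f hf p hp
    have hnorm : (0:ℝ) < ‖p.1‖ := norm_pos_iff.mpr hp
    have e4β : ‖p.1‖ ^ (4*β) = uu p ^ β * uu p ^ β := by
      rw [show (4:ℝ)*β = 2*β + 2*β by ring, Real.rpow_add hnorm, norm_rpow_eq β p]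
    rw [norm_rpow_eq β p, e4β]
    rfl
  have einv : ∀ p : Pt n m, ‖p.1‖⁻¹ ^ (2:ℕ) = (uu p)⁻¹ := by
    intro p
    rw [inv_pow, uu_eq_norm]
  constructor
  · intro ε hε
    refine ⟨c, hcpos, fun f hf p hp => ?_⟩
    have hkey := key_est hβ hf hp
    have hconv := conv f hf p hp
    have hε2 : 0 ≤ ε * (calL β f p)^2 := mul_nonneg hε.le (sq_nonneg _)
    rw [ge_iff_le, hconv, einv p]
    rw [ge_iff_le, ← hc] at hkey
    linarith
  · have hnm : (0:ℝ) < (n:ℝ) + (m:ℝ) := by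
      have : (1:ℝ) ≤ (n:ℝ) := by exact_mod_cast hn
      linarith
    refine ⟨c, 1/(4*((n:ℝ)+(m:ℝ))), hcpos, by positivity, fun f hf p hp => ?_⟩
    have hkey := key_est hβ hf hp
    have hconv := conv f hf p hp
    have hcal := cal_sq_bound (β := β) (f := f) hp
    rw [ge_iff_le, einv p]
    rw [ge_iff_le, ← hc] at hkey
    set S : ℝ := (∑ i, ∑ k, Dd (exv i) (Dd (exv k) f) p ^ 2)
        + 2 * uu p ^ β * (∑ i, ∑ j, Dd (exv i) (Dd (eyv j) f) p ^ 2)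
        + uu p ^ β * uu p ^ β * (∑ j, ∑ l, Dd (eyv j) (Dd (eyv l) f) p ^ 2) with hS
    have h2 : 1/(4*((n:ℝ)+(m:ℝ))) * (calL β f p)^2 ≤ S / 2 := by
      have := mul_le_mul_of_nonneg_left hcal (le_of_lt (by positivity :
        (0:ℝ) < 1/(4*((n:ℝ)+(m:ℝ)))))
      calc 1/(4*((n:ℝ)+(m:ℝ))) * (calL β f p)^2
          ≤ 1/(4*((n:ℝ)+(m:ℝ))) * (2*((n:ℝ)+(m:ℝ)) * S) := this
      _ = S / 2 := by field_simp; ring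
    linarith

end
end
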